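/- arXiv:1405.4363 — 8 statements merged into one kernel-verified Lean document; each statement's English description precedes it below -/
import Mathlib

section
/- Let X be a non-empty set of integers. (i) If X consists only of strictly positive integers, then D(X) = 0. (ii) If 0 ∈ X and X consists of non-negative integers, then D(X) = 1. (iii) If X contains both a positive and a negative integer, then χ(X) ≤ D(X) ≤ diam(X), where diam(X) = sup_{x,y ∈ X} |x − y|. -/
/-- A minimal zero-sum sequence over `X`: a non-empty multiset of elements of `X`
whose sum is `0` and such that no non-empty proper sub-multiset has sum `0`. -/
def IsMinZeroSumSeq {G : Type*} [AddCommGroup G] (X : Set G) (s : Multiset G) : Prop :=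
  s ≠ 0 ∧ (∀ x ∈ s, x ∈ X) ∧ s.sum = 0 ∧ ∀ t < s, t ≠ 0 → t.sum ≠ 0

/-- The Davenport constant of a subset `X` of an abelian group: the supremum of the
lengths of minimal zero-sum sequences over `X` (0 if there are none). -/
noncomputable def davenport {G : Type*} [AddCommGroup G] (X : Set G) : ℕ∞ :=
  ⨆ (s : Multiset G) (_ : IsMinZeroSumSeq X s), (Multiset.card s : ℕ∞)


/-- `χ(X) = sup {(|x|+|y|)/gcd(x,y) : x, y ∈ X, xy < 0}`. -/
noncomputable def chi (X : Set ℤ) : ℕ∞ :=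
  ⨆ (x : ℤ) (_ : x ∈ X) (y : ℤ) (_ : y ∈ X) (_ : x * y < 0),
    (((x.natAbs + y.natAbs) / Int.gcd x y : ℕ) : ℕ∞)

/-- `diam(X) = sup_{x,y ∈ X} |x - y|`. -/
noncomputable def diamZ (X : Set ℤ) : ℕ∞ :=
  ⨆ (x : ℤ) (_ : x ∈ X) (y : ℤ) (_ : y ∈ X), ((x - y).natAbs : ℕ∞)

/-!
Over nonnegative integers a zero-sum sequence consists of zeros, and minimality leaves only `0`
itself. For `x > 0 > y` with `g = gcd x y`, the sequence of `|y| / g` copies of `x` and `x / g`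
copies of `y` is minimal because `x / g` and `|y| / g` are coprime; this gives `χ(X) ≤ D(X)`.
Conversely, a zero-sum sequence with terms in `[m, M]`, `m < 0 ≤ M`, can be ordered greedily so
that all its prefix sums lie in `(m, M]`; for a minimal sequence these prefix sums are pairwise
distinct, so its length is at most `M - m ≤ diam(X)`.
-/

section ZeroSum

variable {G : Type*} [AddCommGroup G] {X : Set G} {s : Multiset G}

theorem le_davenport (h : IsMinZeroSumSeq X s) : (Multiset.card s : ℕ∞) ≤ davenport X :=
  le_iSup₂ (f := fun s (_ : IsMinZeroSumSeq X s) => (Multiset.card s : ℕ∞)) s h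

theorem davenport_le {n : ℕ∞} (h : ∀ s, IsMinZeroSumSeq X s → (Multiset.card s : ℕ∞) ≤ n) :
    davenport X ≤ n :=
  iSup₂_le h

theorem isMinZeroSumSeq_singleton_zero (h0 : (0 : G) ∈ X) : IsMinZeroSumSeq X {0} :=
  ⟨Multiset.singleton_ne_zero 0, by simpa using h0, Multiset.sum_singleton 0,
    fun _ ht ht0 => (ht0 (Multiset.lt_singleton.mp ht)).elim⟩

theorem IsMinZeroSumSeq.eq_singleton_zero_of_zero_mem (h : IsMinZeroSumSeq X s)
    (h0 : (0 : G) ∈ s) : s = {0} := by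
  by_contra hne
  exact h.2.2.2 {0} (lt_of_le_of_ne (Multiset.singleton_le.mpr h0) (Ne.symm hne))
    (Multiset.singleton_ne_zero 0) (Multiset.sum_singleton 0)

theorem IsMinZeroSumSeq.eq_singleton_zero_of_nonneg [PartialOrder G] [IsOrderedAddMonoid G]
    (h : IsMinZeroSumSeq X s) (hX : ∀ x ∈ X, 0 ≤ x) : s = {0} := by
  obtain ⟨x, hx⟩ := Multiset.exists_mem_of_ne_zero h.1
  have hzero :=
    Multiset.all_zero_of_le_zero_le_of_sum_eq_zero (fun y hy => hX y (h.2.1 y hy)) h.2.2.1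
  exact h.eq_singleton_zero_of_zero_mem (hzero x hx ▸ hx)

theorem IsMinZeroSumSeq.injOn_sum_take {l : List G} (h : IsMinZeroSumSeq X l) :
    Set.InjOn (fun i => (l.take i).sum) (Set.Iio l.length) := by
  suffices ∀ i j, i < j → j < l.length → (l.take i).sum ≠ (l.take j).sum by
    intro i hi j hj hij
    by_contra hne
    rcases Nat.lt_or_gt_of_ne hne with hlt | hlt
    exacts [this i j hlt hj hij, this j i hlt hi hij.symm]
  intro i j hij hj heq
  set seg := (l.take j).drop i
  have hseg_sum : seg.sum = 0 := by
    have := List.sum_take_add_sum_drop (l.take j) i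
    rw [List.take_take, min_eq_left hij.le, heq] at this
    simpa using this
  have hseg_len : seg.length = j - i := by simp [seg]; omega
  have hseg_le : (seg : Multiset G) ≤ l :=
    Multiset.coe_le.mpr ((List.drop_sublist _ _).trans (List.take_sublist _ _)).subperm
  have hseg_lt : (seg : Multiset G) < l :=
    lt_of_le_of_ne hseg_le fun he => by
      have := congrArg Multiset.card he
      simp only [Multiset.coe_card, hseg_len] at this
      omega
  refine h.2.2.2 _ hseg_lt (fun he => ?_) (by simpa using hseg_sum)
  have := congrArg Multiset.card he
  simp only [Multiset.coe_card, hseg_len, Multiset.card_zero] at this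
  omega

end ZeroSum

section Ordering

variable {α : Type*} [AddCommGroup α] [LinearOrder α] [IsOrderedAddMonoid α]

theorem Multiset.exists_mem_nonneg_of_sum_nonneg {s : Multiset α} (hs : s ≠ 0)
    (h : 0 ≤ s.sum) : ∃ x ∈ s, 0 ≤ x := by
  by_contra! hneg
  have := Multiset.sum_lt_sum_of_nonempty (f := id) (g := fun _ => (0 : α)) hs hneg
  simp only [Multiset.map_id, Multiset.map_const', Multiset.sum_replicate, smul_zero] at this
  exact this.not_ge h

theorem Multiset.exists_mem_nonpos_of_sum_nonpos {s : Multiset α} (hs : s ≠ 0)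
    (h : s.sum ≤ 0) : ∃ x ∈ s, x ≤ 0 := by
  by_contra! hpos
  have := Multiset.sum_lt_sum_of_nonempty (f := fun _ => (0 : α)) (g := id) hs hpos
  simp only [Multiset.map_id, Multiset.map_const', Multiset.sum_replicate, smul_zero] at this
  exact this.not_ge h

/-- Greedy ordering: while the running sum is `≤ 0` append a nonnegative term, otherwise a
nonpositive one. -/
theorem Multiset.exists_list_add_sum_take_mem_Ioc {m M c : α} {s : Multiset α}
    (hs : ∀ x ∈ s, x ∈ Set.Icc m M) (hc : c ∈ Set.Ioc m M) (hsum : c + s.sum = 0) :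
    ∃ l : List α, (l : Multiset α) = s ∧ ∀ i, c + (l.take i).sum ∈ Set.Ioc m M := by
  induction s using Multiset.strongInductionOn generalizing c with
  | ih s ih =>
  rcases eq_or_ne s 0 with rfl | hs0
  · exact ⟨[], rfl, fun _ => by simpa using hc⟩
  have hsum' : s.sum = -c := eq_neg_of_add_eq_zero_right hsum
  obtain ⟨x, hx, hcx⟩ : ∃ x ∈ s, c + x ∈ Set.Ioc m M := by
    rcases le_or_gt c 0 with hc0 | hc0
    · obtain ⟨x, hx, hx0⟩ :=
        Multiset.exists_mem_nonneg_of_sum_nonneg hs0 (hsum' ▸ neg_nonneg.mpr hc0)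
      exact ⟨x, hx, hc.1.trans_le (le_add_of_nonneg_right hx0),
        add_le_of_nonpos_of_le hc0 (hs x hx).2⟩
    · obtain ⟨x, hx, hx0⟩ :=
        Multiset.exists_mem_nonpos_of_sum_nonpos hs0 (hsum' ▸ neg_nonpos.mpr hc0.le)
      exact ⟨x, hx, lt_add_of_pos_of_le hc0 (hs x hx).1, add_le_of_le_of_nonpos hc.2 hx0⟩
  have hsplit := Multiset.cons_erase hx
  obtain ⟨l, hl, hpref⟩ := ih (s.erase x) (Multiset.erase_lt.mpr hx)
    (fun y hy => hs y (Multiset.mem_of_mem_erase hy)) hcx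
    (by rw [← hsplit, Multiset.sum_cons] at hsum; rwa [add_assoc])
  refine ⟨x :: l, by rw [← hsplit, ← hl]; rfl, fun i => ?_⟩
  cases i with
  | zero => simpa using hc
  | succ i => simpa [add_assoc] using hpref i

end Ordering

namespace IsMinZeroSumSeq

variable {X : Set ℤ} {s : Multiset ℤ}

theorem card_le_toNat_sub (h : IsMinZeroSumSeq X s) {m M : ℤ} (hm : m < 0) (hM : 0 ≤ M)
    (hs : ∀ x ∈ s, x ∈ Set.Icc m M) : Multiset.card s ≤ (M - m).toNat := by
  obtain ⟨l, rfl, hpref⟩ :=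
    Multiset.exists_list_add_sum_take_mem_Ioc hs (c := 0) ⟨hm, hM⟩ (by simpa using h.2.2.1)
  calc Multiset.card (l : Multiset ℤ) = (Finset.range l.length).card := by simp
    _ ≤ (Finset.Ioc m M).card :=
      Finset.card_le_card_of_injOn _ (fun i _ => by simpa using hpref i)
        (h.injOn_sum_take.mono fun i hi => by simpa using hi)
    _ = (M - m).toNat := Int.card_Ioc m M

theorem card_le_diamZ (h : IsMinZeroSumSeq X s) {p q : ℤ} (hp : p ∈ X) (hp0 : 0 ≤ p)
    (hq : q ∈ X) (hq0 : q < 0) : (Multiset.card s : ℕ∞) ≤ diamZ X := by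
  classical
  set F := insert p (insert q s.toFinset)
  have hF : F.Nonempty := Finset.insert_nonempty _ _
  have hFX : ∀ x ∈ F, x ∈ X := by
    intro x hx
    simp only [F, Finset.mem_insert, Multiset.mem_toFinset] at hx
    rcases hx with rfl | rfl | hx
    exacts [hp, hq, h.2.1 x hx]
  have hmem : ∀ x ∈ s, x ∈ F := fun x hx => by simp [F, hx]
  have hcard := h.card_le_toNat_sub (m := F.min' hF) (M := F.max' hF)
    ((F.min'_le q (by simp [F])).trans_lt hq0) (hp0.trans (F.le_max' p (by simp [F])))
    fun x hx => ⟨F.min'_le x (hmem x hx), F.le_max' x (hmem x hx)⟩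
  calc (Multiset.card s : ℕ∞) ≤ (F.max' hF - F.min' hF).natAbs := by
        exact_mod_cast hcard.trans (by omega)
    _ ≤ diamZ X := le_iSup₂_of_le _ (hFX _ (F.max'_mem hF))
        (le_iSup₂_of_le _ (hFX _ (F.min'_mem hF)) le_rfl)

end IsMinZeroSumSeq

theorem Multiset.eq_replicate_add_replicate_of_le {α : Type*} [DecidableEq α] {x y : α}
    (hxy : x ≠ y) {a b : ℕ} {t : Multiset α} (ht : t ≤ replicate a x + replicate b y) :
    t = replicate (t.count x) x + replicate (t.count y) y := by
  ext z
  have hz := Multiset.count_le_of_le z ht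
  by_cases hzx : z = x
  · subst hzx; simp [Multiset.count_replicate, hxy.symm]
  by_cases hzy : z = y
  · subst hzy; simp [Multiset.count_replicate, hxy]
  simp_all [Multiset.count_replicate, Ne.symm hzx, Ne.symm hzy]

/-- A sub-multiset with `A` copies of `x` and `B` copies of `y` has sum zero iff
`A * u = B * v`; by coprimality and `A ≤ v` this forces `(A, B) = (0, 0)` or `(v, u)`. -/
theorem isMinZeroSumSeq_replicate_add_replicate {X : Set ℤ} {x y : ℤ} {u v : ℕ} (hx : x ∈ X)
    (hy : y ∈ X) (hx0 : x ≠ 0) (hv : 0 < v) (huv : u.Coprime v)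
    (hsum : v * x + u * y = 0) :
    IsMinZeroSumSeq X (Multiset.replicate v x + Multiset.replicate u y) := by
  classical
  have hxy : x ≠ y := by
    rintro rfl
    exact hx0 (by nlinarith)
  refine ⟨Multiset.card_pos.mp (by simp [hv]), fun z hz => ?_, by simpa using hsum,
    fun t hts ht0 htsum => ?_⟩
  · rcases Multiset.mem_add.mp hz with hz | hz
    exacts [Multiset.eq_of_mem_replicate hz ▸ hx, Multiset.eq_of_mem_replicate hz ▸ hy]
  have ht := Multiset.eq_replicate_add_replicate_of_le hxy hts.le
  set A := t.count x
  set B := t.count y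
  have hA : A ≤ v := by
    simpa [Multiset.count_replicate, hxy.symm] using Multiset.count_le_of_le x hts.le
  have hAB : A * u = B * v := by
    rw [ht] at htsum
    simp only [Multiset.sum_add, Multiset.sum_replicate, nsmul_eq_mul] at htsum
    have : ((A * u : ℕ) - (B * v : ℕ) : ℤ) * x = 0 := by
      push_cast
      linear_combination u * htsum - B * hsum
    exact_mod_cast sub_eq_zero.mp ((mul_eq_zero.mp this).resolve_right hx0)
  have hvA : v ∣ A := huv.symm.dvd_of_dvd_mul_right ⟨B, by rw [hAB, mul_comm]⟩
  rcases Nat.eq_zero_or_pos A with hA0 | hApos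
  · have hB0 : B = 0 := by
      rw [hA0, zero_mul] at hAB
      exact (mul_eq_zero.mp hAB.symm).resolve_right hv.ne'
    exact ht0 (by rw [ht, hA0, hB0]; simp)
  · have hAv : A = v := le_antisymm hA (Nat.le_of_dvd hApos hvA)
    have hBu : B = u := by
      rw [hAv, mul_comm] at hAB
      exact (Nat.eq_of_mul_eq_mul_right hv hAB).symm
    exact hts.ne (by rw [ht, hAv, hBu])

theorem add_div_gcd_le_davenport {X : Set ℤ} {a b : ℕ} (ha : 0 < a) (hb : 0 < b)
    (haX : (a : ℤ) ∈ X) (hbX : -(b : ℤ) ∈ X) : (((a + b) / a.gcd b : ℕ) : ℕ∞) ≤ davenport X := by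
  obtain ⟨g, u, v, hg, huv, rfl, rfl⟩ := Nat.exists_coprime' (Nat.gcd_pos_of_pos_left b ha)
  have hgcd : (u * g).gcd (v * g) = g := by rw [Nat.gcd_mul_right, huv.gcd_eq_one, one_mul]
  have hmin := isMinZeroSumSeq_replicate_add_replicate haX hbX (by positivity)
    (Nat.pos_of_mul_pos_right hb) huv (by push_cast; ring)
  rw [hgcd, ← add_mul, Nat.mul_div_cancel _ hg]
  simpa [add_comm] using le_davenport hmin

theorem chi_le_davenport (X : Set ℤ) : chi X ≤ davenport X := by
  refine iSup₂_le fun x hx => iSup₂_le fun y hy => iSup_le fun hxy => ?_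
  wlog hx0 : 0 < x generalizing x y
  · rw [add_comm, Int.gcd_comm]
    exact this y hy x hx (by rwa [mul_comm]) (pos_of_mul_neg_right hxy (not_lt.mp hx0))
  have hy0 : y < 0 := neg_of_mul_neg_right hxy hx0.le
  refine add_div_gcd_le_davenport (Int.natAbs_pos.mpr hx0.ne') (Int.natAbs_pos.mpr hy0.ne)
    ?_ ?_
  · rwa [Int.natAbs_of_nonneg hx0.le]
  · rwa [Int.ofNat_natAbs_of_nonpos hy0.le, neg_neg]

theorem davenport_of_subset_int_general (X : Set ℤ) :
    (X ⊆ {x : ℤ | 0 < x} → davenport X = 0) ∧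
    (0 ∈ X → X ⊆ {x : ℤ | 0 ≤ x} → davenport X = 1) ∧
    ((∃ x ∈ X, 0 < x) → (∃ y ∈ X, y < 0) →
      chi X ≤ davenport X ∧ davenport X ≤ diamZ X) := by
  refine ⟨fun hpos => ?_, fun h0 hnn => ?_, fun ⟨p, hp, hp0⟩ ⟨q, hq, hq0⟩ => ?_⟩
  · refine le_antisymm (davenport_le fun s hs => ?_) bot_le
    have h0 : (0 : ℤ) ∈ X :=
      hs.2.1 0 (by simp [hs.eq_singleton_zero_of_nonneg fun x hx => (hpos hx).le])
    simpa using hpos h0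
  · refine le_antisymm (davenport_le fun s hs => ?_) ?_
    · simp [hs.eq_singleton_zero_of_nonneg hnn]
    · simpa using le_davenport (isMinZeroSumSeq_singleton_zero h0)
  · exact ⟨chi_le_davenport X, davenport_le fun s hs => hs.card_le_diamZ hp hp0.le hq hq0⟩

theorem davenport_of_subset_int (X : Set ℤ) (hX : X.Nonempty) :
    (X ⊆ {x : ℤ | 0 < x} → davenport X = 0) ∧
    (0 ∈ X → X ⊆ {x : ℤ | 0 ≤ x} → davenport X = 1) ∧
    ((∃ x ∈ X, 0 < x) → (∃ y ∈ X, y < 0) →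
      chi X ≤ davenport X ∧ davenport X ≤ diamZ X) :=
  davenport_of_subset_int_general X
end

section
/- Let m and M be positive integers. Then (m + M)/gcd(m, M) ≤ D(⟦−m, M⟧) ≤ m + M. In particular, if gcd(m, M) = 1, then D(⟦−m, M⟧) = m + M. -/
/-- Greedy ordering lemma: a multiset over `[-m, M]` with sum `-t` can be ordered so that
all partial sums (starting from `t`) stay in `[1-m, M]`. -/
lemma exists_greedy_order (m M : ℕ) (r : Multiset ℤ)
    (hr : ∀ x ∈ r, -(m : ℤ) ≤ x ∧ x ≤ M) (t : ℤ)
    (ht1 : 1 - m ≤ t) (ht2 : t ≤ M) (hsum : t + r.sum = 0) :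
    ∃ l : List ℤ, (l : Multiset ℤ) = r ∧
      ∀ k ≤ l.length, 1 - m ≤ t + (l.take k).sum ∧ t + (l.take k).sum ≤ M := by
  induction r using Multiset.strongInductionOn generalizing t with
  | _ r ih =>
    rcases eq_or_ne r 0 with rfl | hr0
    · refine ⟨[], rfl, ?_⟩
      intro k hk
      have hk0 : k = 0 := by simpa using hk
      subst hk0
      simp only [List.take_nil, List.sum_nil, add_zero]
      exact ⟨ht1, ht2⟩
    · -- pick an element x with sign opposite to t
      have hcard : 1 ≤ Multiset.card r := Multiset.card_pos.mpr hr0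
      have hx : ∃ x ∈ r, (t ≤ 0 → 0 ≤ x) ∧ (0 < t → x ≤ 0) := by
        rcases le_or_gt t 0 with htle | htgt
        · by_contra h
          push_neg at h
          have hlt : ∀ x ∈ r, x ≤ (-1 : ℤ) := by
            intro x hxr
            have := h x hxr
            omega
          have := Multiset.sum_le_card_nsmul r (-1) hlt
          have : r.sum ≤ -(Multiset.card r : ℤ) := by simpa using this
          omega
        · by_contra h
          push_neg at h
          have hlt : ∀ x ∈ r, (1 : ℤ) ≤ x := by
            intro x hxr
            have := h x hxr
            omega
          have := Multiset.card_nsmul_le_sum (s := r) (a := (1:ℤ)) hlt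
          have : (Multiset.card r : ℤ) ≤ r.sum := by simpa using this
          omega
      obtain ⟨x, hxr, hx1, hx2⟩ := hx
      have hxb := hr x hxr
      have hlt : r.erase x < r := Multiset.erase_lt.mpr hxr
      have hcons : x ::ₘ r.erase x = r := Multiset.cons_erase hxr
      have hsum' : (t + x) + (r.erase x).sum = 0 := by
        have : r.sum = x + (r.erase x).sum := by rw [← hcons]; simp
        omega
      have ht1' : 1 - m ≤ t + x := by
        rcases le_or_gt t 0 with h | h
        · have := hx1 h; omega
        · omega
      have ht2' : t + x ≤ M := by
        rcases le_or_gt t 0 with h | h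
        · omega
        · have := hx2 h; omega
      obtain ⟨l', hl', hpre⟩ := ih (r.erase x) hlt
        (fun y hy => hr y (Multiset.mem_of_le (Multiset.erase_le x r) hy))
        (t + x) ht1' ht2' hsum'
      refine ⟨x :: l', by rw [← Multiset.cons_coe, hl', hcons], ?_⟩
      intro k hk
      cases k with
      | zero =>
        simp only [List.take_zero, List.sum_nil, add_zero]
        exact ⟨ht1, ht2⟩
      | succ k =>
        have hk' : k ≤ l'.length := by
          simp only [List.length_cons] at hk
          omega
        have := hpre k hk'
        simpa [List.take_cons, add_assoc] using this

lemma card_le_of_min (m M : ℕ) (hm : 0 < m) (hM : 0 < M) (s : Multiset ℤ)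
    (hs : IsMinZeroSumSeq (Set.Icc (-(m : ℤ)) M) s) : Multiset.card s ≤ m + M := by
  obtain ⟨hne, hmem, hsum, hmin⟩ := hs
  obtain ⟨l, hl, hpre⟩ := exists_greedy_order m M s
    (fun x hx => by simpa [Set.mem_Icc] using hmem x hx) 0
    (by omega) (by positivity) (by simpa using hsum)
  simp only [zero_add] at hpre
  have hlen : l.length = Multiset.card s := by rw [← hl]; simp
  set n := l.length with hn
  have hn1 : 1 ≤ n := by
    rw [hlen]
    exact Multiset.card_pos.mpr hne
  -- sub-multisets given by slices
  have hslice : ∀ i j : ℕ, i < j → j < n → (l.take i).sum ≠ (l.take j).sum := by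
    intro i j hij hjn hEq
    set sl := (l.drop i).take (j - i) with hsl
    have htake : l.take j = l.take i ++ sl := by
      rw [hsl, ← List.take_add]
      congr 1
      omega
    have hsub : (sl : Multiset ℤ) ≤ s := by
      rw [← hl]
      exact ((List.take_sublist _ _).trans (List.drop_sublist _ _)).subperm
    have hcard : Multiset.card (sl : Multiset ℤ) < Multiset.card s := by
      simp only [Multiset.coe_card, hsl, List.length_take, List.length_drop]
      omega
    have hltm : (sl : Multiset ℤ) < s := lt_of_le_of_ne hsub (by
      intro h; rw [h] at hcard; omega)
    have hne0 : (sl : Multiset ℤ) ≠ 0 := by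
      simp only [ne_eq, Multiset.coe_eq_zero, ← List.length_eq_zero_iff]
      simp only [hsl, List.length_take, List.length_drop]
      omega
    refine hmin _ hltm hne0 ?_
    have : (l.take j).sum = (l.take i).sum + sl.sum := by
      rw [htake, List.sum_append]
    have : sl.sum = 0 := by omega
    simpa using this
  have hnz : ∀ k : ℕ, 0 < k → k < n → (l.take k).sum ≠ 0 := by
    intro k hk0 hkn hEq
    have hsub : ((l.take k : List ℤ) : Multiset ℤ) ≤ s := by
      rw [← hl]; exact (List.take_sublist _ _).subperm
    have hcard : Multiset.card ((l.take k : List ℤ) : Multiset ℤ) < Multiset.card s := by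
      simp only [Multiset.coe_card, List.length_take]
      omega
    have hltm : ((l.take k : List ℤ) : Multiset ℤ) < s := lt_of_le_of_ne hsub (by
      intro h; rw [h] at hcard; omega)
    refine hmin _ hltm ?_ (by simpa using hEq)
    simp only [ne_eq, Multiset.coe_eq_zero, ← List.length_eq_zero_iff, List.length_take]
    omega
  -- injection from Ioo 0 n into Icc (1-m) M \ {0}
  have hinj : Set.InjOn (fun k => (l.take k).sum)
      (Finset.Ioo 0 n : Finset ℕ) := by
    intro i hi j hj hEq
    simp only [Finset.coe_Ioo, Set.mem_Ioo] at hi hj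
    by_contra hne'
    rcases lt_or_gt_of_ne hne' with h | h
    · exact hslice i j h hj.2 hEq
    · exact hslice j i h hi.2 hEq.symm
  have hmaps : ∀ k ∈ (Finset.Ioo 0 n : Finset ℕ),
      (l.take k).sum ∈ Finset.Icc (1 - (m : ℤ)) M \ {0} := by
    intro k hk
    simp only [Finset.mem_Ioo] at hk
    have := hpre k (le_of_lt hk.2)
    simp only [Finset.mem_sdiff, Finset.mem_Icc, Finset.mem_singleton]
    exact ⟨⟨by linarith [this.1], this.2⟩, hnz k hk.1 hk.2⟩
  have hcard := Finset.card_le_card_of_injOn _ hmaps hinj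
  have h1 : (Finset.Ioo 0 n).card = n - 1 := by simp
  have h2 : (Finset.Icc (1 - (m : ℤ)) M \ {0}).card = m + M - 1 := by
    rw [Finset.card_sdiff_of_subset (by simp only [Finset.singleton_subset_iff, Finset.mem_Icc]; omega)]
    simp only [Finset.card_singleton, Int.card_Icc]
    have : (M : ℤ) + 1 - (1 - m) = (m + M : ℕ) := by push_cast; ring
    rw [this, Int.toNat_natCast]
  rw [h1, h2] at hcard
  omega

theorem davenport_Icc_bounds (m M : ℕ) (hm : 0 < m) (hM : 0 < M) :
    (((m + M) / Nat.gcd m M : ℕ) : ℕ∞) ≤ davenport (Set.Icc (-(m : ℤ)) M) ∧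
    davenport (Set.Icc (-(m : ℤ)) M) ≤ ((m + M : ℕ) : ℕ∞) ∧
    (Nat.gcd m M = 1 → davenport (Set.Icc (-(m : ℤ)) M) = ((m + M : ℕ) : ℕ∞)) := by
  set g := Nat.gcd m M with hg
  have hg0 : 0 < g := Nat.gcd_pos_of_pos_left M hm
  set m' := m / g with hm'
  set M' := M / g with hM'
  have hgm : g ∣ m := Nat.gcd_dvd_left m M
  have hgM : g ∣ M := Nat.gcd_dvd_right m M
  have hmm' : m = g * m' := (Nat.mul_div_cancel' hgm).symm
  have hMM' : M = g * M' := (Nat.mul_div_cancel' hgM).symm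
  have hm'0 : 0 < m' := Nat.div_pos (Nat.le_of_dvd hm hgm) hg0
  have hM'0 : 0 < M' := Nat.div_pos (Nat.le_of_dvd hM hgM) hg0
  have hcop : Nat.Coprime m' M' := Nat.coprime_div_gcd_div_gcd hg0
  set s0 : Multiset ℤ :=
    Multiset.replicate M' (-(m : ℤ)) + Multiset.replicate m' (M : ℤ) with hs0
  have hne : -(m : ℤ) ≠ (M : ℤ) := by omega
  have hcount1 : s0.count (-(m : ℤ)) = M' := by
    rw [hs0, Multiset.count_add, Multiset.count_replicate, Multiset.count_replicate,
      if_pos rfl, if_neg (Ne.symm hne)]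
    omega
  have hcount2 : s0.count ((M : ℤ)) = m' := by
    rw [hs0, Multiset.count_add, Multiset.count_replicate, Multiset.count_replicate,
      if_pos rfl, if_neg hne]
    omega
  have hkey : (M' : ℤ) * m = (m' : ℤ) * M := by
    push_cast [hmm', hMM']
    ring
  have hmin : IsMinZeroSumSeq (Set.Icc (-(m : ℤ)) M) s0 := by
    refine ⟨?_, ?_, ?_, ?_⟩
    · have hmem0 : (-(m : ℤ)) ∈ s0 := by
        rw [hs0, Multiset.mem_add]
        exact Or.inl (Multiset.mem_replicate.mpr ⟨by omega, rfl⟩)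
      intro h
      rw [h] at hmem0
      exact Multiset.notMem_zero _ hmem0
    · intro x hx
      simp only [hs0, Multiset.mem_add, Multiset.mem_replicate] at hx
      rcases hx with ⟨-, rfl⟩ | ⟨-, rfl⟩ <;> simp [Set.mem_Icc] <;> omega
    · simp only [hs0, Multiset.sum_add, Multiset.sum_replicate, nsmul_eq_mul]
      linarith [hkey]
    · intro t hts htne hsum
      set a := t.count (-(m : ℤ)) with ha
      set b := t.count ((M : ℤ)) with hb
      have helem : ∀ x ∈ t, x = -(m : ℤ) ∨ x = (M : ℤ) := by
        intro x hx
        have : x ∈ s0 := Multiset.mem_of_le (le_of_lt hts) hx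
        simp only [hs0, Multiset.mem_add, Multiset.mem_replicate] at this
        tauto
      have hta : t.filter (· = -(m : ℤ)) = Multiset.replicate a (-(m : ℤ)) :=
        Multiset.filter_eq' t (-(m : ℤ))
      have htb : t.filter (· = (M : ℤ)) = Multiset.replicate b ((M : ℤ)) :=
        Multiset.filter_eq' t ((M : ℤ))
      have hdecomp : t = Multiset.replicate a (-(m : ℤ)) + Multiset.replicate b ((M : ℤ)) := by
        have hfc : t.filter (fun x => ¬ x = -(m : ℤ)) = t.filter (· = (M : ℤ)) := by
          refine Multiset.filter_congr ?_
          intro x hx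
          rcases helem x hx with rfl | rfl
          · simp [hne]
          · simp [Ne.symm hne]
        calc t = t.filter (· = -(m : ℤ)) + t.filter (fun x => ¬ x = -(m : ℤ)) :=
              (Multiset.filter_add_not _ t).symm
          _ = Multiset.replicate a (-(m : ℤ)) + Multiset.replicate b ((M : ℤ)) := by
              rw [hfc, hta, htb]
      have hale : a ≤ M' := by
        rw [ha, ← hcount1]
        exact Multiset.count_le_of_le _ (le_of_lt hts)
      have hble : b ≤ m' := by
        rw [hb, ← hcount2]
        exact Multiset.count_le_of_le _ (le_of_lt hts)
      have hcards : Multiset.card t < Multiset.card s0 := Multiset.card_lt_card hts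
      have hcardt : Multiset.card t = a + b := by rw [hdecomp]; simp
      have hcards0 : Multiset.card s0 = M' + m' := by rw [hs0]; simp
      have hsumt : -(a : ℤ) * m + (b : ℤ) * M = 0 := by
        rw [hdecomp] at hsum
        simp only [Multiset.sum_add, Multiset.sum_replicate, nsmul_eq_mul] at hsum
        linarith [hsum]
      have hab : a * m = b * M := by
        have : (a : ℤ) * m = (b : ℤ) * M := by linarith [hsumt]
        exact_mod_cast this
      have hab' : a * m' = b * M' := by
        have : g * (a * m') = g * (b * M') := by
          calc g * (a * m') = a * m := by rw [hmm']; ring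
          _ = b * M := hab
          _ = g * (b * M') := by rw [hMM']; ring
        exact Nat.eq_of_mul_eq_mul_left hg0 this
      have hdvd : M' ∣ a := Nat.Coprime.dvd_of_dvd_mul_right hcop.symm
        ⟨b, by rw [hab']; ring⟩
      have ha0 : a ≠ 0 := by
        intro h0
        rw [h0, Nat.zero_mul] at hab
        have hb0 : b = 0 := by
          rcases Nat.mul_eq_zero.mp hab.symm with h | h
          · exact h
          · omega
        apply htne
        rw [hdecomp, h0, hb0]
        simp
      have haM' : a = M' := Nat.le_antisymm hale (Nat.le_of_dvd (Nat.pos_of_ne_zero ha0) hdvd)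
      have hbm' : b = m' := by
        rw [haM', mul_comm b M'] at hab'
        exact (Nat.eq_of_mul_eq_mul_left hM'0 hab').symm
      omega
  constructor
  · have hle := le_iSup₂ (f := fun (s : Multiset ℤ)
      (_ : IsMinZeroSumSeq (Set.Icc (-(m : ℤ)) M) s) => (Multiset.card s : ℕ∞)) s0 hmin
    have hcards0 : Multiset.card s0 = (m + M) / g := by
      rw [hs0]
      simp only [Multiset.card_add, Multiset.card_replicate]
      rw [Nat.add_div_of_dvd_right hgm]
      omega
    rw [davenport]
    rw [hcards0] at hle
    exact hle
  haveI hub : davenport (Set.Icc (-(m : ℤ)) M) ≤ ((m + M : ℕ) : ℕ∞) := by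
    rw [davenport]
    refine iSup₂_le fun s hs => ?_
    exact_mod_cast card_le_of_min m M hm hM s hs
  refine ⟨hub, fun hcop1 => le_antisymm hub ?_⟩
  have hle := le_iSup₂ (f := fun (s : Multiset ℤ)
    (_ : IsMinZeroSumSeq (Set.Icc (-(m : ℤ)) M) s) => (Multiset.card s : ℕ∞)) s0 hmin
  have : Multiset.card s0 = m + M := by
    rw [hs0]
    simp only [Multiset.card_add, Multiset.card_replicate]
    rw [hm', hM', hcop1]
    omega
  rw [davenport]
  rw [this] at hle
  exact hle
end

section
/- For positive integers m and M, D(⟦−m, M⟧) = M + m + o(min(m, M)) as min(m, M) → +∞; that is, for every ε > 0 there exists N such that for all positive integers m, M with min(m, M) ≥ N one has M + m − ε·min(m, M) ≤ D(⟦−m, M⟧) ≤ M + m. -/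
/-!
Upper bound: a minimal zero-sum sequence other than `[0]` has no zero term, so it can be ordered
greedily (add a positive term while the running sum is `≤ 0`, a negative one otherwise) with all
partial sums in `⟦1 - m, M⟧`; by minimality the non-empty partial sums are pairwise distinct,
hence there are at most `M + m` of them.

Lower bound: for coprime `a ≤ M` and `b ≤ m` the sequence `aᵇ (-b)ᵃ` is minimal, of length
`a + b`. Counting pairs with a common divisor `d ≥ 2` (at most `∑ d, (k/d + 1)² < k²` of them)
shows that the box `(M - k, M] × (m - k, m]` contains a coprime pair once `k ≈ δ · min m M`
and `min m M` is large.
-/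

open Finset Filter

theorem IsMinZeroSumSeq.eq_singleton_zero {G : Type*} [AddCommGroup G] {X : Set G}
    {s : Multiset G} (hs : IsMinZeroSumSeq X s) (h0 : (0 : G) ∈ s) : s = {0} := by
  by_contra hne
  exact hs.2.2.2 {0} (lt_of_le_of_ne (Multiset.singleton_le.mpr h0) (Ne.symm hne))
    (by simp) (by simp)

theorem IsMinZeroSumSeq.card_le_davenport {G : Type*} [AddCommGroup G] {X : Set G}
    {s : Multiset G} (hs : IsMinZeroSumSeq X s) : (Multiset.card s : ℕ∞) ≤ davenport X :=
  le_iSup₂ (f := fun s (_ : IsMinZeroSumSeq X s) => (Multiset.card s : ℕ∞)) s hs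

theorem IsMinZeroSumSeq.injOn_sum_take_s3 {G : Type*} [AddCommGroup G] {X : Set G} {L : List G}
    (hL : IsMinZeroSumSeq X L) : Set.InjOn (fun i => (L.take i).sum) (Set.Icc 1 L.length) := by
  suffices key : ∀ i j, 1 ≤ i → i < j → j ≤ L.length → (L.take i).sum ≠ (L.take j).sum by
    intro i hi j hj hij
    rcases lt_trichotomy i j with h | h | h
    · exact absurd hij (key i j hi.1 h hj.2)
    · exact h
    · exact absurd hij.symm (key j i hj.1 h hi.2)
  intro i j hi hij hj heq
  set block := (L.take j).drop i
  have hblock_sum : block.sum = 0 := by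
    have := List.sum_take_add_sum_drop (L.take j) i
    rw [List.take_take, min_eq_left hij.le, ← heq] at this
    simpa using this
  have hblock_len : block.length = j - i := by
    simp only [block, List.length_drop, List.length_take]; omega
  have hblock_le : (block : Multiset G) ≤ L :=
    Multiset.coe_le.mpr ((List.drop_sublist _ _).trans (List.take_sublist _ _)).subperm
  refine hL.2.2.2 block (lt_of_le_of_ne hblock_le fun h => ?_) ?_ (by simpa using hblock_sum)
  · have := congrArg Multiset.card h
    simp only [Multiset.coe_card] at this
    omega
  · intro h
    have := congrArg Multiset.card h
    simp only [Multiset.coe_card, Multiset.card_zero] at this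
    omega

theorem exists_list_sum_take_mem_Icc {m M : ℤ} (s : Multiset ℤ)
    (hs : ∀ x ∈ s, x ∈ Set.Icc (-m) M ∧ x ≠ 0) (c : ℤ) (hc : c ∈ Set.Icc (1 - m) M)
    (hsum : c + s.sum = 0) :
    ∃ L : List ℤ, (L : Multiset ℤ) = s ∧ ∀ i, c + (L.take i).sum ∈ Set.Icc (1 - m) M := by
  induction s using Multiset.strongInductionOn generalizing c with
  | ih s ih =>
  rcases eq_or_ne s 0 with rfl | hne
  · exact ⟨[], rfl, by simpa using hc⟩
  obtain ⟨x, hxs, hcx⟩ : ∃ x ∈ s, c + x ∈ Set.Icc (1 - m) M := by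
    rcases le_or_gt c 0 with hc0 | hc0
    · obtain ⟨x, hxs, hx⟩ : ∃ x ∈ s, 0 < x := by
        by_contra! hneg
        have hle := Multiset.sum_le_card_nsmul s (-1) fun x hx => by
          have := (hs x hx).2; have := hneg x hx; omega
        have := Multiset.card_pos.mpr hne
        simp only [nsmul_eq_mul, mul_neg_one] at hle
        omega
      exact ⟨x, hxs, by have := (hs x hxs).1.2; have := hc.1; have := hc.2; constructor <;> omega⟩
    · obtain ⟨x, hxs, hx⟩ : ∃ x ∈ s, x < 0 := by
        by_contra! hpos
        have hle := Multiset.card_nsmul_le_sum (s := s) (a := 1) fun x hx => by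
          have := (hs x hx).2; have := hpos x hx; omega
        have := Multiset.card_pos.mpr hne
        simp only [nsmul_eq_mul, mul_one] at hle
        omega
      exact ⟨x, hxs, by have := (hs x hxs).1.1; have := hc.1; have := hc.2; constructor <;> omega⟩
  have hsum' : c + x + (s.erase x).sum = 0 := by
    rw [add_assoc, Multiset.sum_erase hxs, hsum]
  obtain ⟨L, hL, hLsum⟩ := ih _ (Multiset.erase_lt.mpr hxs)
    (fun y hy => hs y (Multiset.mem_of_mem_erase hy)) _ hcx hsum'
  refine ⟨x :: L, by rw [← Multiset.cons_coe, hL, Multiset.cons_erase hxs], ?_⟩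
  rintro (_ | i)
  · simpa using hc
  · simpa [add_assoc] using hLsum i

theorem IsMinZeroSumSeq.card_le_of_Icc {m M : ℕ} (hm : 0 < m) {s : Multiset ℤ}
    (hs : IsMinZeroSumSeq (Set.Icc (-(m : ℤ)) M) s) : Multiset.card s ≤ M + m := by
  by_cases h0 : (0 : ℤ) ∈ s
  · simp only [hs.eq_singleton_zero h0, Multiset.card_singleton]
    omega
  obtain ⟨L, rfl, hL⟩ := exists_list_sum_take_mem_Icc s
    (fun x hx => ⟨hs.2.1 x hx, fun hx0 => h0 (hx0 ▸ hx)⟩) 0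
    (by constructor <;> omega) (by simp [hs.2.2.1])
  have hcard := Finset.card_le_card_of_injOn (fun i => (L.take i).sum)
    (s := Finset.Icc 1 L.length) (t := Finset.Icc (1 - (m : ℤ)) M)
    (fun i _ => by simpa using hL i) (by simpa using hs.injOn_sum_take_s3)
  simp only [Nat.card_Icc, Int.card_Icc] at hcard
  simp only [Multiset.coe_card]
  omega

theorem davenport_Icc_le {m M : ℕ} (hm : 0 < m) :
    davenport (Set.Icc (-(m : ℤ)) M) ≤ ((M + m : ℕ) : ℕ∞) :=
  iSup₂_le fun _ hs => by exact_mod_cast hs.card_le_of_Icc hm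

theorem Multiset.exists_eq_replicate_add_replicate_of_le {α : Type*} [DecidableEq α] {x y : α}
    {q : ℕ} : ∀ {p : ℕ} {t : Multiset α}, t ≤ replicate p x + replicate q y →
      ∃ i ≤ p, ∃ j ≤ q, t = replicate i x + replicate j y
  | 0, t, ht => by
    obtain ⟨j, hj, rfl⟩ := le_replicate_iff.mp (by simpa using ht)
    exact ⟨0, le_rfl, j, hj, by simp⟩
  | p + 1, t, ht => by
    rw [replicate_succ, cons_add] at ht
    by_cases hx : x ∈ t
    · obtain ⟨i, hi, j, hj, hij⟩ :=
        exists_eq_replicate_add_replicate_of_le (erase_le_iff_le_cons.mpr ht)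
      exact ⟨i + 1, by omega, j, hj, by rw [← cons_erase hx, hij, replicate_succ, cons_add]⟩
    · obtain ⟨i, hi, j, hj, hij⟩ :=
        exists_eq_replicate_add_replicate_of_le ((le_cons_of_notMem hx).mp ht)
      exact ⟨i, by omega, j, hj, hij⟩

theorem isMinZeroSumSeq_replicate_add_replicate_s3 {X : Set ℤ} {a b : ℕ} (ha : 0 < a)
    (hb : 0 < b) (hab : a.Coprime b) (haX : (a : ℤ) ∈ X) (hbX : -(b : ℤ) ∈ X) :
    IsMinZeroSumSeq X (Multiset.replicate b (a : ℤ) + Multiset.replicate a (-(b : ℤ))) := by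
  refine ⟨fun h => by simpa [ha.ne'] using congrArg Multiset.card h, ?_, by
    simp only [Multiset.sum_add, Multiset.sum_replicate, Int.nsmul_eq_mul, mul_neg]; ring, ?_⟩
  · intro x hx
    rcases Multiset.mem_add.mp hx with hx | hx <;> rw [Multiset.eq_of_mem_replicate hx] <;>
      assumption
  intro t hlt ht0 hsum
  obtain ⟨i, hi, j, hj, rfl⟩ := Multiset.exists_eq_replicate_add_replicate_of_le hlt.le
  have hij : i * a = j * b := by
    simp only [Multiset.sum_add, Multiset.sum_replicate, nsmul_eq_mul] at hsum
    exact_mod_cast (by linarith : (i : ℤ) * a = j * b)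
  have haj : a ∣ j := hab.dvd_of_dvd_mul_right ⟨i, by rw [← hij, mul_comm]⟩
  rcases Nat.eq_zero_or_pos j with rfl | hj0
  · obtain rfl : i = 0 := by simpa [ha.ne'] using hij
    exact ht0 (by simp)
  · obtain rfl : j = a := le_antisymm hj (Nat.le_of_dvd hj0 haj)
    obtain rfl : i = b := Nat.eq_of_mul_eq_mul_right ha (by rw [hij, mul_comm])
    exact hlt.ne rfl

theorem Nat.card_filter_dvd_Ioc_le (x k d : ℕ) : #{a ∈ Ioc x (x + k) | d ∣ a} ≤ k / d + 1 := by
  have hsplit : #{a ∈ Ioc 0 x | d ∣ a} + #{a ∈ Ioc x (x + k) | d ∣ a} =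
      #{a ∈ Ioc 0 (x + k) | d ∣ a} := by
    rw [← card_union_of_disjoint (disjoint_filter_filter (Ioc_disjoint_Ioc_of_le le_rfl)),
      ← filter_union, Ioc_union_Ioc_eq_Ioc (Nat.zero_le x) (Nat.le_add_right x k)]
  rw [Nat.Ioc_filter_dvd_card_eq_div, Nat.Ioc_filter_dvd_card_eq_div] at hsplit
  have := Nat.add_div_le_div_add_div_add_one x k d
  omega

theorem sum_Icc_two_inv_sq_le (n : ℕ) : ∑ d ∈ Icc 2 n, ((d : ℝ) ^ 2)⁻¹ ≤ 11 / 12 := by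
  calc ∑ d ∈ Icc 2 n, ((d : ℝ) ^ 2)⁻¹ ≤ ∑ d ∈ insert 2 (Ioo 2 (n + 1)), ((d : ℝ) ^ 2)⁻¹ :=
        sum_le_sum_of_subset_of_nonneg (fun d hd => by
          simp only [mem_Icc, mem_insert, mem_Ioo, Order.lt_add_one_iff] at hd ⊢; omega)
          (fun _ _ _ => by positivity)
    _ = 1 / 4 + ∑ d ∈ Ioo 2 (n + 1), ((d : ℝ) ^ 2)⁻¹ := by rw [sum_insert (by simp)]; norm_num
    _ ≤ 1 / 4 + 2 / (2 + 1) := by gcongr; exact_mod_cast sum_Ioo_inv_sq_le 2 (n + 1)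
    _ = 11 / 12 := by norm_num

theorem sum_Icc_two_div_add_one_sq_lt {k n : ℕ} (h : 1872 * n < k ^ 2) :
    ∑ d ∈ Icc 2 n, ((k : ℝ) / d + 1) ^ 2 < (k : ℝ) ^ 2 := by
  have hh : (1872 : ℝ) * n < (k : ℝ) ^ 2 := by exact_mod_cast h
  -- `(t + 1)² ≤ (13/12) t² + 13`, and `(13/12)·(11/12) < 1` leaves room for the `13 n`.
  calc ∑ d ∈ Icc 2 n, ((k : ℝ) / d + 1) ^ 2
      ≤ ∑ d ∈ Icc 2 n, (13 / 12 * (k : ℝ) ^ 2 * ((d : ℝ) ^ 2)⁻¹ + 13) :=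
        sum_le_sum fun d _ => by
          rw [mul_assoc, ← div_eq_mul_inv, ← div_pow]
          nlinarith [sq_nonneg ((k : ℝ) / d - 12)]
    _ = 13 / 12 * (k : ℝ) ^ 2 * ∑ d ∈ Icc 2 n, ((d : ℝ) ^ 2)⁻¹ + 13 * #(Icc 2 n) := by
        rw [sum_add_distrib, ← mul_sum, sum_const, nsmul_eq_mul, mul_comm (13 : ℝ)]
    _ ≤ 13 / 12 * (k : ℝ) ^ 2 * (11 / 12) + 13 * n := by
        gcongr
        · exact sum_Icc_two_inv_sq_le n
        · simp
    _ < (k : ℝ) ^ 2 := by linarith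

theorem Nat.exists_coprime_mem_Ioc (x y k : ℕ) (h : 1872 * (min x y + k) < k ^ 2) :
    ∃ a ∈ Ioc x (x + k), ∃ b ∈ Ioc y (y + k), Nat.Coprime a b := by
  by_contra! hcop
  set n := min x y + k
  have hcover : Ioc x (x + k) ×ˢ Ioc y (y + k) ⊆
      (Icc 2 n).biUnion fun d => {a ∈ Ioc x (x + k) | d ∣ a} ×ˢ {b ∈ Ioc y (y + k) | d ∣ b} := by
    rintro ⟨a, b⟩ hab
    simp only [mem_product, mem_Ioc] at hab
    have hg1 : Nat.gcd a b ≠ 1 := hcop a (by simpa using hab.1) b (by simpa using hab.2)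
    have hga := Nat.le_of_dvd (by omega) (Nat.gcd_dvd_left a b)
    have hgb := Nat.le_of_dvd (by omega) (Nat.gcd_dvd_right a b)
    have hg0 := Nat.gcd_pos_of_pos_left b (by omega : 0 < a)
    simp only [mem_biUnion, mem_Icc, mem_product, mem_filter, mem_Ioc]
    exact ⟨Nat.gcd a b, ⟨by omega, by omega⟩, ⟨hab.1, Nat.gcd_dvd_left a b⟩,
      ⟨hab.2, Nat.gcd_dvd_right a b⟩⟩
  have hcount : (k : ℝ) ^ 2 ≤ ∑ d ∈ Icc 2 n, ((k : ℝ) / d + 1) ^ 2 := by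
    have := card_le_card hcover
    calc (k : ℝ) ^ 2 = #(Ioc x (x + k) ×ˢ Ioc y (y + k)) := by simp [sq]
      _ ≤ #((Icc 2 n).biUnion fun d =>
            {a ∈ Ioc x (x + k) | d ∣ a} ×ˢ {b ∈ Ioc y (y + k) | d ∣ b}) := by exact_mod_cast this
      _ ≤ ∑ d ∈ Icc 2 n, (#{a ∈ Ioc x (x + k) | d ∣ a} * #{b ∈ Ioc y (y + k) | d ∣ b} : ℝ) := by
          exact_mod_cast card_biUnion_le.trans (by simp only [card_product, le_refl])
      _ ≤ ∑ d ∈ Icc 2 n, ((k : ℝ) / d + 1) ^ 2 := by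
          refine sum_le_sum fun d _ => ?_
          have hx : (#{a ∈ Ioc x (x + k) | d ∣ a} : ℝ) ≤ k / d + 1 :=
            (Nat.cast_le.mpr (Nat.card_filter_dvd_Ioc_le x k d)).trans (by
              push_cast; gcongr; exact Nat.cast_div_le)
          have hy : (#{b ∈ Ioc y (y + k) | d ∣ b} : ℝ) ≤ k / d + 1 :=
            (Nat.cast_le.mpr (Nat.card_filter_dvd_Ioc_le y k d)).trans (by
              push_cast; gcongr; exact Nat.cast_div_le)
          rw [sq]
          exact mul_le_mul hx hy (by positivity) (by positivity)
  exact (sum_Icc_two_div_add_one_sq_lt h).not_ge hcount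

theorem add_le_toNat_davenport_Icc {m M a b : ℕ} (ha : 0 < a) (haM : a ≤ M) (hb : 0 < b)
    (hbm : b ≤ m) (hab : a.Coprime b) : a + b ≤ (davenport (Set.Icc (-(m : ℤ)) M)).toNat := by
  have hmin := isMinZeroSumSeq_replicate_add_replicate_s3 (X := Set.Icc (-(m : ℤ)) M) ha hb hab
    (by constructor <;> omega) (by constructor <;> omega)
  have hlow := hmin.card_le_davenport
  have hup := davenport_Icc_le (M := M) (by omega : 0 < m)
  have := ENat.toNat_le_toNat hlow (ne_top_of_le_ne_top (ENat.natCast_ne_top _) hup)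
  rw [Multiset.card_add, Multiset.card_replicate, Multiset.card_replicate,
    ENat.toNat_natCast] at this
  omega

theorem eventually_mul_lt_floor_mul_sq {δ : ℝ} (hδ : 0 < δ) (C : ℕ) :
    ∀ᶠ n : ℕ in atTop, C * n < ⌊δ * n⌋₊ ^ 2 := by
  filter_upwards [tendsto_natCast_atTop_atTop.eventually_ge_atTop (2 / δ),
    tendsto_natCast_atTop_atTop.eventually_gt_atTop (4 * C / δ ^ 2)] with n h2 hC
  rw [div_le_iff₀ hδ] at h2
  rw [div_lt_iff₀ (by positivity)] at hC
  -- `⌊δ n⌋ > δ n - 1 ≥ δ n / 2`, and `(δ n / 2)² > C n` once `n > 4 C / δ²`.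
  have hfloor : δ * n / 2 ≤ ⌊δ * n⌋₊ := by
    have := Nat.lt_floor_add_one (δ * n)
    linarith
  have : (C : ℝ) * n < (⌊δ * n⌋₊ : ℝ) ^ 2 := by
    have hn : (0 : ℝ) < n := by nlinarith
    nlinarith [pow_le_pow_left₀ (by positivity) hfloor 2]
  exact_mod_cast this

theorem davenport_Icc_asymptotic :
    ∀ ε : ℝ, 0 < ε → ∃ N : ℕ, ∀ m M : ℕ, 0 < m → 0 < M → N ≤ min m M →
      ((M + m : ℝ) - ε * (min m M : ℕ) ≤
        (((davenport (Set.Icc (-(m : ℤ)) M)).toNat : ℕ) : ℝ)) ∧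
      davenport (Set.Icc (-(m : ℤ)) M) ≤ ((M + m : ℕ) : ℕ∞) := by
  intro ε hε
  set δ := min (ε / 2) 1
  have hδ : 0 < δ := lt_min (by positivity) one_pos
  obtain ⟨N, hN⟩ := eventually_atTop.mp (eventually_mul_lt_floor_mul_sq hδ 1872)
  refine ⟨N, fun m M hm _ hμN => ⟨?_, davenport_Icc_le hm⟩⟩
  set μ := min m M
  set k := ⌊δ * μ⌋₊
  have hkδ : (k : ℝ) ≤ δ * μ := Nat.floor_le (by positivity)
  have hkμ : k ≤ μ :=
    Nat.floor_le_of_le (mul_le_of_le_one_left (by positivity) (min_le_right _ _))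
  obtain ⟨a, ha, b, hb, hab⟩ := Nat.exists_coprime_mem_Ioc (M - k) (m - k) k (by
    rw [show min (M - k) (m - k) + k = μ by omega]; exact hN μ hμN)
  simp only [Finset.mem_Ioc] at ha hb
  have hD : ((a + b : ℕ) : ℝ) ≤ (davenport (Set.Icc (-(m : ℤ)) M)).toNat := by
    exact_mod_cast add_le_toNat_davenport_Icc (m := m) (M := M) (by omega) (by omega) (by omega)
      (by omega) hab
  have hab' : (M + m + 2 : ℝ) ≤ a + b + 2 * k := by
    exact_mod_cast (by omega : M + m + 2 ≤ a + b + 2 * k)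
  have hkε : 2 * (k : ℝ) ≤ ε * μ := by
    nlinarith [min_le_left (ε / 2) 1, show (0 : ℝ) ≤ μ by positivity]
  push_cast at hD
  linarith
end

section
/- Let m and M be positive integers and let s be a zero-sum sequence over ⟦−m, M⟧ of length m + M. Then s is minimal if and only if gcd(m, M) = 1 and s consists of the value M repeated m times together with the value −m repeated M times. -/
def Good (m M : ℕ) : ℤ → List ℤ → Prop
  | _, [] => True
  | t, x :: l => ((0 < t → x < 0) ∧ 1 - (m:ℤ) ≤ t + x ∧ t + x ≤ M) ∧ Good m M (t + x) l

lemma sum_nonpos' (s : Multiset ℤ) (h : ∀ x ∈ s, x ≤ 0) : s.sum ≤ 0 := by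
  induction s using Multiset.induction_on with
  | empty => simp
  | cons a t ih =>
    simp only [Multiset.sum_cons]
    have := h a (Multiset.mem_cons_self a t)
    have := ih (fun x hx => h x (Multiset.mem_cons_of_mem hx))
    omega

lemma greedy (m M : ℕ) : ∀ (n : ℕ) (u : Multiset ℤ) (t : ℤ), Multiset.card u = n →
    (∀ x ∈ u, -(m:ℤ) ≤ x ∧ x ≤ M ∧ x ≠ 0) → t + u.sum = 0 → 1 - (m:ℤ) ≤ t → t ≤ M →
    ∃ l : List ℤ, (l : Multiset ℤ) = u ∧ Good m M t l := by
  intro n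
  induction n with
  | zero =>
    intro u t hc _ _ _ _
    exact ⟨[], by simpa using (Multiset.card_eq_zero.mp hc).symm, trivial⟩
  | succ n ih =>
    intro u t hc hmem hsum h1 h2
    have hu : u ≠ 0 := by
      intro h; rw [h] at hc; simp at hc
    by_cases ht : 0 < t
    · have hex : ∃ x ∈ u, x < 0 := by
        by_contra h
        push_neg at h
        have : (0:ℤ) ≤ u.sum := Multiset.sum_nonneg (fun x hx => h x hx)
        omega
      obtain ⟨x, hxu, hxneg⟩ := hex
      have hxm : -(m:ℤ) ≤ x := (hmem x hxu).1
      have hcons : x ::ₘ u.erase x = u := Multiset.cons_erase hxu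
      have hsum' : (t + x) + (u.erase x).sum = 0 := by
        have : u.sum = x + (u.erase x).sum := by rw [← hcons]; simp
        omega
      have hc' : Multiset.card (u.erase x) = n := by
        have := Multiset.card_erase_of_mem hxu
        rw [hc] at this; simpa using this
      obtain ⟨l, hl, hg⟩ := ih (u.erase x) (t + x) hc'
        (fun y hy => hmem y (Multiset.mem_of_mem_erase hy)) hsum' (by omega) (by omega)
      refine ⟨x :: l, ?_, ⟨⟨fun _ => hxneg, by omega, by omega⟩, hg⟩⟩
      rw [show ((x :: l : List ℤ) : Multiset ℤ) = x ::ₘ (l : Multiset ℤ) from rfl, hl, hcons]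
    · push_neg at ht
      have hex : ∃ x ∈ u, 0 < x := by
        by_contra h
        push_neg at h
        obtain ⟨y, hy⟩ := Multiset.exists_mem_of_ne_zero hu
        have hyneg : y < 0 := lt_of_le_of_ne (h y hy) (hmem y hy).2.2
        have hcons : y ::ₘ u.erase y = u := Multiset.cons_erase hy
        have h2' : (u.erase y).sum ≤ 0 :=
          sum_nonpos' _ (fun z hz => h z (Multiset.mem_of_mem_erase hz))
        have : u.sum = y + (u.erase y).sum := by rw [← hcons]; simp
        omega
      obtain ⟨x, hxu, hxpos⟩ := hex
      have hxM : x ≤ (M:ℤ) := (hmem x hxu).2.1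
      have hcons : x ::ₘ u.erase x = u := Multiset.cons_erase hxu
      have hsum' : (t + x) + (u.erase x).sum = 0 := by
        have : u.sum = x + (u.erase x).sum := by rw [← hcons]; simp
        omega
      have hc' : Multiset.card (u.erase x) = n := by
        have := Multiset.card_erase_of_mem hxu
        rw [hc] at this; simpa using this
      obtain ⟨l, hl, hg⟩ := ih (u.erase x) (t + x) hc'
        (fun y hy => hmem y (Multiset.mem_of_mem_erase hy)) hsum' (by omega) (by omega)
      refine ⟨x :: l, ?_, ⟨⟨fun h => absurd h (by omega), by omega, by omega⟩, hg⟩⟩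
      rw [show ((x :: l : List ℤ) : Multiset ℤ) = x ::ₘ (l : Multiset ℤ) from rfl, hl, hcons]

lemma good_spec (m M : ℕ) : ∀ (l : List ℤ) (t : ℤ), Good m M t l → ∀ k, k < l.length →
    (0 < t + (l.take k).sum → t + (l.take (k+1)).sum < t + (l.take k).sum) ∧
    1 - (m:ℤ) ≤ t + (l.take (k+1)).sum ∧ t + (l.take (k+1)).sum ≤ M := by
  intro l
  induction l with
  | nil => intro t _ k hk; simp at hk
  | cons x l ih =>
    intro t hg k hk
    obtain ⟨⟨h1, h2, h3⟩, hg'⟩ := hg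
    match k with
    | 0 =>
      simp only [List.take_zero, List.sum_nil, add_zero, List.take_succ_cons,
        List.take_zero, List.sum_cons, List.sum_nil]
      exact ⟨fun h => by have := h1 h; omega, by omega, by omega⟩
    | (j+1) =>
      have hk' : j < l.length := by simpa using hk
      have := ih (t + x) hg' j hk'
      simp only [List.take_succ_cons, List.sum_cons, ← add_assoc] at *
      exact this

lemma ne_zero_of_min (m M : ℕ) (hm : 0 < m) (hM : 0 < M) (s : Multiset ℤ)
    (hmin : IsMinZeroSumSeq (Set.Icc (-(m:ℤ)) M) s) (hcard : Multiset.card s = m + M) :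
    ∀ y ∈ s, y ≠ 0 := by
  intro y hy h0
  subst h0
  refine hmin.2.2.2 {0} ?_ (by simp) (by simp)
  refine lt_of_le_of_ne (Multiset.singleton_le.mpr hy) ?_
  intro h
  rw [← h] at hcard
  simp at hcard
  omega

lemma pos_eq_M (m M : ℕ) (hm : 0 < m) (hM : 0 < M) (s : Multiset ℤ)
    (hmin : IsMinZeroSumSeq (Set.Icc (-(m:ℤ)) M) s) (hcard : Multiset.card s = m + M) :
    ∀ x ∈ s, 0 < x → x = M := by
  have hne0 := ne_zero_of_min m M hm hM s hmin hcard
  have hbd : ∀ y ∈ s, -(m:ℤ) ≤ y ∧ y ≤ M := by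
    intro y hy
    have := hmin.2.1 y hy
    rw [Set.mem_Icc] at this
    exact this
  intro x hx hxpos
  -- build a good ordering starting with x
  have hxM : x ≤ (M:ℤ) := (hbd x hx).2
  have hsum' : x + (s.erase x).sum = 0 := by
    have : s.sum = x + (s.erase x).sum := by rw [← Multiset.cons_erase hx]; simp
    have hs0 := hmin.2.2.1
    omega
  obtain ⟨l, hl, hg⟩ := greedy m M (Multiset.card (s.erase x)) (s.erase x) x rfl
    (fun y hy => ⟨(hbd y (Multiset.mem_of_mem_erase hy)).1,
      (hbd y (Multiset.mem_of_mem_erase hy)).2, hne0 y (Multiset.mem_of_mem_erase hy)⟩)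
    hsum' (by omega) hxM
  set L : List ℤ := x :: l with hL
  have hLs : (L : Multiset ℤ) = s := by
    rw [hL, show ((x :: l : List ℤ) : Multiset ℤ) = x ::ₘ (l : Multiset ℤ) from rfl, hl,
      Multiset.cons_erase hx]
  have hGL : Good m M 0 L := by
    refine ⟨⟨fun h => absurd h (by omega), by omega, by omega⟩, ?_⟩
    rw [zero_add]
    exact hg
  have hlen : L.length = m + M := by
    have : Multiset.card (L : Multiset ℤ) = m + M := by rw [hLs]; exact hcard
    simpa using this
  set f : ℕ → ℤ := fun k => (L.take k).sum with hf
  -- distinctness of partial sums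
  have claim : ∀ i j, i < j → j < m + M → f i ≠ f j := by
    intro i j hij hjq heq
    set seg : List ℤ := (L.take j).drop i with hseg
    have happ : L.take i ++ seg = L.take j := by
      have h0 := List.take_append_drop i (L.take j)
      rwa [List.take_take, min_eq_left (le_of_lt hij)] at h0
    have hsumseg : f i + seg.sum = f j := by
      have := congrArg List.sum happ
      rwa [List.sum_append] at this
    have hsub : seg.Sublist L := ((List.drop_sublist i _).trans (List.take_sublist j L))
    have hmsub : (seg : Multiset ℤ) ≤ s := by
      rw [← hLs]
      exact Multiset.coe_le.mpr hsub.subperm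
    have hseglen : seg.length = j - i := by
      rw [hseg, List.length_drop, List.length_take, hlen]
      omega
    have hcardseg : Multiset.card (seg : Multiset ℤ) = j - i := by simpa using hseglen
    have hsum0 : (↑seg : Multiset ℤ).sum = 0 := by
      have hcoe : (↑seg : Multiset ℤ).sum = seg.sum := by simp
      rw [hcoe]; omega
    have hlt : (↑seg : Multiset ℤ) < s := by
      refine lt_of_le_of_ne hmsub (fun h => ?_)
      have h2 := hcardseg
      rw [h, hcard] at h2
      omega
    have hne : (↑seg : Multiset ℤ) ≠ 0 := by
      intro h
      rw [h] at hcardseg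
      simp only [Multiset.card_zero] at hcardseg
      omega
    exact hmin.2.2.2 _ hlt hne hsum0
  -- pigeonhole to find M as a partial sum
  have hfBounds : ∀ k, 1 ≤ k → k ≤ m + M → 1 - (m:ℤ) ≤ f k ∧ f k ≤ M := by
    intro k hk1 hk2
    obtain ⟨j, rfl⟩ : ∃ j, k = j + 1 := ⟨k - 1, by omega⟩
    have := good_spec m M L 0 hGL j (by omega)
    constructor <;> [skip; skip] <;>
      · have h := this.2
        simp only [zero_add] at h
        first | exact h.1 | exact h.2
  have hMin : ∃ k, 1 ≤ k ∧ k ≤ m + M - 1 ∧ f k = M := by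
    classical
    set S : Finset ℕ := Finset.Icc 1 (m + M - 1) with hS
    set T : Finset ℤ := (Finset.Icc (1 - (m:ℤ)) (M:ℤ)).erase 0 with hT
    have hmaps : ∀ k ∈ S, f k ∈ T := by
      intro k hk
      rw [hS, Finset.mem_Icc] at hk
      rw [hT, Finset.mem_erase, Finset.mem_Icc]
      have hb := hfBounds k hk.1 (by omega)
      refine ⟨?_, hb.1, hb.2⟩
      have := claim 0 k (by omega) (by omega)
      simpa [hf] using (Ne.symm this)
    have hinj : Set.InjOn f S := by
      intro i hi j hj hijeq
      simp only [hS, Finset.coe_Icc, Set.mem_Icc] at hi hj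
      by_contra hne
      rcases lt_or_gt_of_ne hne with h | h
      · exact claim i j h (by omega) hijeq
      · exact claim j i h (by omega) hijeq.symm
    have hcardS : S.card = m + M - 1 := by rw [hS, Nat.card_Icc]; omega
    have hcardT : T.card = m + M - 1 := by
      rw [hT, Finset.card_erase_of_mem (by rw [Finset.mem_Icc]; constructor <;> omega)]
      rw [Int.card_Icc]
      omega
    have himage : Finset.image f S = T := by
      apply Finset.eq_of_subset_of_card_le
      · intro y hy
        obtain ⟨k, hk, rfl⟩ := Finset.mem_image.mp hy
        exact hmaps k hk
      · rw [Finset.card_image_of_injOn hinj, hcardS, hcardT]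
    have hMT : (M:ℤ) ∈ T := by
      rw [hT, Finset.mem_erase, Finset.mem_Icc]
      refine ⟨by omega, by omega, le_refl _⟩
    rw [← himage, Finset.mem_image] at hMT
    obtain ⟨k, hk, hfk⟩ := hMT
    rw [hS, Finset.mem_Icc] at hk
    exact ⟨k, hk.1, hk.2, hfk⟩
  obtain ⟨k, hk1, hk2, hfk⟩ := hMin
  obtain ⟨j, rfl⟩ : ∃ j, k = j + 1 := ⟨k - 1, by omega⟩
  have hjlen : j < L.length := by omega
  have hspec := good_spec m M L 0 hGL j hjlen
  simp only [zero_add] at hspec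
  have hA : 0 < f j → f (j+1) < f j := hspec.1
  have hfj_nonpos : f j ≤ 0 := by
    by_contra hpos
    push_neg at hpos
    have hlt := hA hpos
    have hfjle : f j ≤ M := by
      rcases Nat.eq_zero_or_pos j with h0 | h0
      · subst h0; simp [hf] at hpos
      · exact (hfBounds j h0 (by omega)).2
    omega
  -- the element at position j
  have helem := List.sum_take_succ L j hjlen
  have hmem_elem : L[j] ∈ s := by
    rw [← hLs]
    exact List.getElem_mem hjlen
  have helemM : L[j] ≤ (M:ℤ) := (hbd _ hmem_elem).2
  have hfj0 : f j = 0 := by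
    have hstep : f (j+1) = f j + L[j] := helem
    omega
  have hj0 : j = 0 := by
    by_contra h
    exact claim 0 j (by omega) (by omega) (by simpa [hf] using hfj0.symm)
  subst hj0
  have : f 1 = x := by simp [hf, hL]
  rw [hfk] at this
  omega

lemma min_neg (m M : ℕ) (s : Multiset ℤ) (hmin : IsMinZeroSumSeq (Set.Icc (-(m:ℤ)) M) s) :
    IsMinZeroSumSeq (Set.Icc (-(M:ℤ)) m) (s.map (fun x => -x)) := by
  obtain ⟨h0, hmem, hsum, hminl⟩ := hmin
  refine ⟨by simpa using h0, ?_, ?_, ?_⟩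
  · intro y hy
    rw [Multiset.mem_map] at hy
    obtain ⟨x, hx, rfl⟩ := hy
    have := hmem x hx
    rw [Set.mem_Icc] at *
    omega
  · have : (s.map (fun x => -x)).sum = -s.sum := by
      simpa using Multiset.sum_map_neg (m := s) (f := id)
    rw [this, hsum, neg_zero]
  · intro t hlt hne htsum
    have hle : t ≤ s.map (fun x => -x) := le_of_lt hlt
    have key : t.map (fun x => -x) ≤ s := by
      have h2 := Multiset.map_le_map (f := fun x => -x) hle
      simpa [Multiset.map_map, Function.comp] using h2
    have hlt0 : t.map (fun x => -x) < s := by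
      refine lt_of_le_of_ne key (fun h => ?_)
      have : t = s.map (fun x => -x) := by
        have := congrArg (Multiset.map (fun x : ℤ => -x)) h
        simpa [Multiset.map_map, Function.comp] using this
      exact absurd this (ne_of_lt hlt)
    refine hminl (t.map (fun x => -x)) hlt0 (by simpa using hne) ?_
    have : (t.map (fun x => -x)).sum = -t.sum := by
      simpa using Multiset.sum_map_neg (m := t) (f := id)
    rw [this, htsum, neg_zero]

theorem inverse_maximal_length (m M : ℕ) (hm : 0 < m) (hM : 0 < M) (s : Multiset ℤ)
    (hmem : ∀ x ∈ s, x ∈ Set.Icc (-(m : ℤ)) M) (hsum : s.sum = 0)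
    (hcard : Multiset.card s = m + M) :
    IsMinZeroSumSeq (Set.Icc (-(m : ℤ)) M) s ↔
      Nat.gcd m M = 1 ∧
        s = Multiset.replicate m (M : ℤ) + Multiset.replicate M (-(m : ℤ)) := by
  constructor
  · intro hmin
    classical
    have hne0 := ne_zero_of_min m M hm hM s hmin hcard
    have hposM : ∀ x ∈ s, 0 < x → x = M := pos_eq_M m M hm hM s hmin hcard
    have hnegm : ∀ x ∈ s, x < 0 → x = -(m:ℤ) := by
      intro x hx hneg
      have hminN := min_neg m M s hmin
      have hcardN : Multiset.card (s.map (fun x => -x)) = M + m := by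
        rw [Multiset.card_map, hcard]; omega
      have hres := pos_eq_M M m hM hm (s.map (fun x => -x)) hminN hcardN
        (-x) (Multiset.mem_map_of_mem _ hx) (by omega)
      omega
    set sp := s.filter (fun x => 0 < x) with hsp
    set sn := s.filter (fun x => ¬ 0 < x) with hsn
    set p := Multiset.card sp with hp
    set n := Multiset.card sn with hn
    have hsplit : sp + sn = s := Multiset.filter_add_not _ s
    have hspR : sp = Multiset.replicate p (M:ℤ) := by
      rw [Multiset.eq_replicate]
      exact ⟨rfl, fun b hb => hposM b (Multiset.mem_of_mem_filter hb) (Multiset.of_mem_filter hb)⟩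
    have hsnR : sn = Multiset.replicate n (-(m:ℤ)) := by
      rw [Multiset.eq_replicate]
      refine ⟨rfl, fun b hb => ?_⟩
      have hbs := Multiset.mem_of_mem_filter hb
      have := Multiset.of_mem_filter hb
      have := hne0 b hbs
      exact hnegm b hbs (by omega)
    have hsumeq : (p:ℤ) * M + (n:ℤ) * (-(m:ℤ)) = 0 := by
      have := hsum
      rw [← hsplit, Multiset.sum_add, hspR, hsnR, Multiset.sum_replicate,
        Multiset.sum_replicate, nsmul_eq_mul, nsmul_eq_mul] at this
      exact this
    have hcardeq : p + n = m + M := by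
      rw [hp, hn, ← Multiset.card_add, hsplit, hcard]
    have hpm : p = m := by
      have h1 : (p:ℤ) * M = (n:ℤ) * m := by linarith
      have h2 : (p:ℤ) + n = m + M := by exact_mod_cast hcardeq
      have h3 : (p:ℤ) * (M + m) = m * (M + m) := by linear_combination h1 + (m:ℤ) * h2
      have h4 : (p:ℤ) = m := by
        have hMm : ((M:ℤ) + m) ≠ 0 := by positivity
        exact mul_right_cancel₀ hMm h3
      exact_mod_cast h4
    have hnM : n = M := by omega
    have hs_eq : s = Multiset.replicate m (M:ℤ) + Multiset.replicate M (-(m:ℤ)) := by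
      rw [← hsplit, hspR, hsnR, hpm, hnM]
    refine ⟨?_, hs_eq⟩
    by_contra hgcd
    set d := Nat.gcd m M with hd
    have hdm : d ∣ m := Nat.gcd_dvd_left m M
    have hdM : d ∣ M := Nat.gcd_dvd_right m M
    have hd2 : 2 ≤ d := by
      rcases Nat.lt_or_ge d 2 with h | h
      · interval_cases d
        · exact absurd (Nat.eq_zero_of_gcd_eq_zero_left hd.symm) (by omega)
        · exact absurd rfl hgcd
      · exact h
    set t := Multiset.replicate (m / d) (M:ℤ) + Multiset.replicate (M / d) (-(m:ℤ)) with ht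
    have htle : t ≤ s := by
      rw [hs_eq, ht]
      exact add_le_add ((Multiset.replicate_le_replicate _).mpr (Nat.div_le_self _ _))
        ((Multiset.replicate_le_replicate _).mpr (Nat.div_le_self _ _))
    have hcardt : Multiset.card t = m / d + M / d := by
      rw [ht]; simp
    have htlt : t < s := by
      refine lt_of_le_of_ne htle (fun h => ?_)
      rw [h, hcard] at hcardt
      have h5 : m / d < m := Nat.div_lt_self hm (by omega)
      have h6 : M / d ≤ M := Nat.div_le_self _ _
      omega
    have htne : t ≠ 0 := by
      intro h
      rw [h] at hcardt
      have hpos : 0 < m / d := Nat.div_pos (Nat.le_of_dvd hm hdm) (by omega)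
      simp only [Multiset.card_zero] at hcardt
      rcases Nat.add_eq_zero.mp hcardt.symm with ⟨h1, _⟩
      exact hpos.ne' h1
    have htsum : t.sum = 0 := by
      rw [ht, Multiset.sum_add, Multiset.sum_replicate, Multiset.sum_replicate,
        nsmul_eq_mul, nsmul_eq_mul]
      have hnat : (m / d) * M = (M / d) * m := by
        apply Nat.eq_of_mul_eq_mul_right (show 0 < d by omega)
        calc m / d * M * d = m / d * d * M := by ring
        _ = m * M := by rw [Nat.div_mul_cancel hdm]
        _ = M * m := by ring
        _ = M / d * d * m := by rw [Nat.div_mul_cancel hdM]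
        _ = M / d * m * d := by ring
      have : ((m / d : ℕ) : ℤ) * M = ((M / d : ℕ) : ℤ) * m := by exact_mod_cast hnat
      linarith
    exact hmin.2.2.2 t htlt htne htsum
  · rintro ⟨hgcd, rfl⟩
    classical
    refine ⟨?_, hmem, hsum, ?_⟩
    · intro h
      rw [h] at hcard
      simp at hcard
      omega
    · intro t hlt hne htsum
      have hMnm : (M:ℤ) ≠ -(m:ℤ) := by omega
      set a := t.count (M:ℤ) with ha
      set b := t.count (-(m:ℤ)) with hb
      have hmemt : ∀ y ∈ t, y = (M:ℤ) ∨ y = -(m:ℤ) := by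
        intro y hy
        have hys := Multiset.mem_of_le (le_of_lt hlt) hy
        rw [Multiset.mem_add] at hys
        rcases hys with h | h
        · exact Or.inl (Multiset.eq_of_mem_replicate h)
        · exact Or.inr (Multiset.eq_of_mem_replicate h)
      have t_eq : t = Multiset.replicate a (M:ℤ) + Multiset.replicate b (-(m:ℤ)) := by
        rw [Multiset.ext]
        intro y
        rw [Multiset.count_add, Multiset.count_replicate, Multiset.count_replicate]
        by_cases hyM : y = (M:ℤ)
        · subst hyM
          rw [if_pos rfl, if_neg (by omega)]
          omega
        · by_cases hym : y = -(m:ℤ)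
          · subst hym
            rw [if_neg (by omega), if_pos rfl]
            omega
          · rw [if_neg (fun h => hyM h.symm), if_neg (fun h => hym h.symm)]
            exact Multiset.count_eq_zero.mpr (fun hy => by rcases hmemt y hy with h | h <;> tauto)
      have haM : a ≤ m := by
        have := Multiset.count_le_of_le (M:ℤ) (le_of_lt hlt)
        rwa [Multiset.count_add, Multiset.count_replicate, Multiset.count_replicate,
          if_pos rfl, if_neg hMnm.symm, add_zero] at this
      have hbM : b ≤ M := by
        have := Multiset.count_le_of_le (-(m:ℤ)) (le_of_lt hlt)
        rwa [Multiset.count_add, Multiset.count_replicate, Multiset.count_replicate,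
          if_neg hMnm, if_pos rfl, zero_add] at this
      have hsumt : (a:ℤ) * M = (b:ℤ) * m := by
        rw [t_eq, Multiset.sum_add, Multiset.sum_replicate, Multiset.sum_replicate,
          nsmul_eq_mul, nsmul_eq_mul] at htsum
        linarith
      have hnat : a * M = b * m := by exact_mod_cast hsumt
      have hco : Nat.Coprime m M := hgcd
      have hdvd : m ∣ a := by
        refine hco.dvd_of_dvd_mul_right ⟨b, ?_⟩
        rw [hnat, Nat.mul_comm]
      rcases Nat.eq_zero_or_pos a with h0 | hpos
      · have hb0 : b = 0 := by
          rw [h0, Nat.zero_mul] at hnat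
          rcases Nat.mul_eq_zero.mp hnat.symm with h | h
          · exact h
          · omega
        rw [h0, hb0] at t_eq
        simp at t_eq
        exact hne t_eq
      · have ham : a = m := Nat.le_antisymm haM (Nat.le_of_dvd hpos hdvd)
        have hbm : b = M := by
          rw [ham] at hnat
          have hb' : b * m = M * m := by
            calc b * m = m * M := hnat.symm
            _ = M * m := Nat.mul_comm m M
          exact Nat.eq_of_mul_eq_mul_right hm hb'
        rw [ham, hbm] at t_eq
        exact absurd t_eq (ne_of_lt hlt)
end

section
/- Let m ≥ 2 be an integer and let s be a zero-sum sequence over ⟦−m, m⟧ of length 2m − 1. Then s is minimal if and only if either s consists of m repeated m − 1 times together with −(m − 1) repeated m times, or s consists of −m repeated m − 1 times together with m − 1 repeated m times. -/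
open Multiset

private lemma card_le_sum_int (S : Multiset ℤ) (h : ∀ x ∈ S, 0 < x) :
    (Multiset.card S : ℤ) ≤ S.sum := by
  induction S using Multiset.induction_on with
  | empty => simp
  | cons a s ih =>
    simp only [Multiset.card_cons, Multiset.sum_cons]
    have ha : 0 < a := h a (mem_cons_self a s)
    have := ih (fun x hx => h x (mem_cons_of_mem hx))
    push_cast
    omega

private lemma sum_map_neg_int (S : Multiset ℤ) : (S.map (fun x => -x)).sum = -S.sum := by
  induction S using Multiset.induction_on with
  | empty => simp
  | cons a u ih =>
    rw [Multiset.map_cons, Multiset.sum_cons, Multiset.sum_cons, ih]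
    ring

private lemma sum_le_card_mul_int (S : Multiset ℤ) (c : ℤ) (h : ∀ x ∈ S, x ≤ c) :
    S.sum ≤ (Multiset.card S : ℤ) * c := by
  induction S using Multiset.induction_on with
  | empty => simp
  | cons a s ih =>
    simp only [Multiset.card_cons, Multiset.sum_cons]
    have ha : a ≤ c := h a (mem_cons_self a s)
    have hs := ih (fun x hx => h x (mem_cons_of_mem hx))
    push_cast
    nlinarith

private lemma exists_max_int (S : Multiset ℤ) (h : S ≠ 0) : ∃ a ∈ S, ∀ b ∈ S, b ≤ a := by
  induction S using Multiset.induction_on with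
  | empty => exact absurd rfl h
  | cons a s ih =>
    by_cases hs : s = 0
    · subst hs
      refine ⟨a, Multiset.mem_cons_self a 0, ?_⟩
      intro b hb
      rw [Multiset.mem_cons] at hb
      rcases hb with rfl | hb
      · exact le_refl b
      · simp at hb
    · obtain ⟨c, hcs, hc⟩ := ih hs
      rcases le_total a c with hac | hca
      · refine ⟨c, Multiset.mem_cons_of_mem hcs, ?_⟩
        intro b hb
        rw [Multiset.mem_cons] at hb
        rcases hb with rfl | hb
        · exact hac
        · exact hc b hb
      · refine ⟨a, Multiset.mem_cons_self a s, ?_⟩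
        intro b hb
        rw [Multiset.mem_cons] at hb
        rcases hb with rfl | hb
        · exact le_refl b
        · exact (hc b hb).trans hca

/-- The reduction step for the key lemma, stated for `max Q < p ∈ P`. -/
private lemma key_step (n : ℕ)
    (IH : ∀ P Q : Multiset ℤ, Multiset.card P + Multiset.card Q < n →
      (∀ x ∈ P, 0 < x) → (∀ x ∈ Q, 0 < x) → P ≠ 0 → Q ≠ 0 → P.sum = Q.sum →
      (∀ U D, U ≤ P → D ≤ Q → U.sum = D.sum → (U = 0 ∧ D = 0) ∨ (U = P ∧ D = Q)) →
      (Multiset.card P : ℤ) * (Multiset.card Q : ℤ) ≤ P.sum)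
    (P Q : Multiset ℤ) (hn : Multiset.card P + Multiset.card Q = n)
    (hP : ∀ x ∈ P, 0 < x) (hQ : ∀ x ∈ Q, 0 < x)
    (hsum : P.sum = Q.sum)
    (hmin : ∀ U D, U ≤ P → D ≤ Q → U.sum = D.sum → (U = 0 ∧ D = 0) ∨ (U = P ∧ D = Q))
    (hk : 2 ≤ Multiset.card P) (hl : 2 ≤ Multiset.card Q)
    (p q : ℤ) (hpP : p ∈ P) (hqQ : q ∈ Q) (hqmax : ∀ b ∈ Q, b ≤ q) (hlt : q < p) :
    (Multiset.card P : ℤ) * (Multiset.card Q : ℤ) ≤ P.sum := by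
  classical
  set P' : Multiset ℤ := (p - q) ::ₘ P.erase p with hP'def
  set Q' : Multiset ℤ := Q.erase q with hQ'def
  have hq0 : 0 < q := hQ q hqQ
  have hpq : 0 < p - q := by omega
  have hPcons : p ::ₘ P.erase p = P := Multiset.cons_erase hpP
  have hQcons : q ::ₘ Q.erase q = Q := Multiset.cons_erase hqQ
  -- cards
  have hcardP' : Multiset.card P' = Multiset.card P := by
    have h1 := congrArg Multiset.card hPcons
    rw [Multiset.card_cons] at h1
    rw [hP'def, Multiset.card_cons]
    omega
  have hcardQ' : Multiset.card Q' + 1 = Multiset.card Q := by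
    have := congrArg Multiset.card hQcons
    simpa [Multiset.card_cons] using this
  -- sums
  have hsumP' : P'.sum = P.sum - q := by
    have h1 := congrArg Multiset.sum hPcons
    rw [Multiset.sum_cons] at h1
    rw [hP'def, Multiset.sum_cons]
    omega
  have hsumQ' : Q'.sum = Q.sum - q := by
    have h1 := congrArg Multiset.sum hQcons
    rw [Multiset.sum_cons] at h1
    rw [hQ'def]
    omega
  -- positivity
  have hP'pos : ∀ x ∈ P', 0 < x := by
    intro x hx
    rw [hP'def, Multiset.mem_cons] at hx
    rcases hx with rfl | hx
    · exact hpq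
    · exact hP x (Multiset.mem_of_mem_erase hx)
  have hQ'pos : ∀ x ∈ Q', 0 < x := fun x hx => hQ x (Multiset.mem_of_mem_erase hx)
  have hP'0 : P' ≠ 0 := Multiset.cons_ne_zero
  have hQ'0 : Q' ≠ 0 := by
    intro h
    rw [h] at hcardQ'
    simp at hcardQ'
    omega
  have hsum' : P'.sum = Q'.sum := by rw [hsumP', hsumQ', hsum]
  -- minimality transfer
  have hmin' : ∀ U D, U ≤ P' → D ≤ Q' → U.sum = D.sum →
      (U = 0 ∧ D = 0) ∨ (U = P' ∧ D = Q') := by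
    intro U D hU hD hUD
    by_cases hcase : (p - q) ∈ U
    · -- replace p - q by p in U, add q to D
      have hUerase : U.erase (p - q) ≤ P.erase p := by
        have h1 : U.erase (p - q) ≤ P'.erase (p - q) := Multiset.erase_le_erase _ hU
        rwa [hP'def, Multiset.erase_cons_head] at h1
      have hU0le : p ::ₘ U.erase (p - q) ≤ P := by
        rw [← hPcons]
        exact Multiset.cons_le_cons p hUerase
      have hD0le : q ::ₘ D ≤ Q := by
        rw [← hQcons]
        exact Multiset.cons_le_cons q hD
      have hUsum : U.sum = (p - q) + (U.erase (p - q)).sum := by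
        conv_lhs => rw [← Multiset.cons_erase hcase]
        rw [Multiset.sum_cons]
      have hsums : (p ::ₘ U.erase (p - q)).sum = (q ::ₘ D).sum := by
        rw [Multiset.sum_cons, Multiset.sum_cons]
        omega
      rcases hmin _ _ hU0le hD0le hsums with ⟨h1, _⟩ | ⟨h1, h2⟩
      · exact absurd h1 Multiset.cons_ne_zero
      · right
        constructor
        · have h3 : U.erase (p - q) = P.erase p := by
            have := h1
            rw [← hPcons] at this
            exact (Multiset.cons_inj_right p).mp this
          calc U = (p - q) ::ₘ U.erase (p - q) := (Multiset.cons_erase hcase).symm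
            _ = (p - q) ::ₘ P.erase p := by rw [h3]
            _ = P' := rfl
        · have := h2
          rw [← hQcons] at this
          exact (Multiset.cons_inj_right q).mp this
    · -- U avoids p - q, so U ≤ P directly
      have hUP : U ≤ P := by
        rw [Multiset.le_iff_count]
        intro a
        have hc := Multiset.count_le_of_le a hU
        by_cases ha : a = p - q
        · subst ha
          rw [Multiset.count_eq_zero.mpr hcase]
          exact Nat.zero_le _
        · rw [hP'def, Multiset.count_cons_of_ne ha] at hc
          exact hc.trans (Multiset.count_le_of_le a (Multiset.erase_le p P))
      have hDQ : D ≤ Q := hD.trans (Multiset.erase_le q Q)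
      rcases hmin U D hUP hDQ hUD with h | ⟨h1, h2⟩
      · exact Or.inl h
      · exfalso
        have hcnt := Multiset.count_le_of_le q hD
        rw [h2, hQ'def, Multiset.count_erase_self] at hcnt
        have : 0 < Q.count q := Multiset.count_pos.mpr hqQ
        omega
  -- apply IH
  have hmeas : Multiset.card P' + Multiset.card Q' < n := by omega
  have hIH := IH P' Q' hmeas hP'pos hQ'pos hP'0 hQ'0 hsum' hmin'
  -- arithmetic
  set k : ℤ := (Multiset.card P : ℤ) with hkdef
  set l : ℤ := (Multiset.card Q : ℤ) with hldef
  have hkZ : (Multiset.card P' : ℤ) = k := by rw [hkdef, hcardP']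
  have hlZ : (Multiset.card Q' : ℤ) = l - 1 := by
    rw [hldef]
    have : (Multiset.card Q' : ℤ) + 1 = (Multiset.card Q : ℤ) := by exact_mod_cast hcardQ'
    omega
  have hk2 : (2 : ℤ) ≤ k := by rw [hkdef]; exact_mod_cast hk
  have hl2 : (2 : ℤ) ≤ l := by rw [hldef]; exact_mod_cast hl
  rw [hkZ, hlZ, hsumP'] at hIH
  -- Q'.sum ≤ (l - 1) * q
  have hQ'bound : Q'.sum ≤ (l - 1) * q := by
    have := sum_le_card_mul_int Q' q (fun x hx => hqmax x (Multiset.mem_of_mem_erase hx))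
    rwa [hlZ] at this
  have hQ'sum : Q'.sum = P.sum - q := by rw [hsumQ', hsum]
  -- k ≤ q
  have hkq : k ≤ q := by
    have h1 : k * (l - 1) ≤ (l - 1) * q := by
      calc k * (l - 1) ≤ P.sum - q := hIH
        _ = Q'.sum := hQ'sum.symm
        _ ≤ (l - 1) * q := hQ'bound
    nlinarith
  nlinarith

private lemma key_lemma : ∀ n : ℕ, ∀ P Q : Multiset ℤ,
    Multiset.card P + Multiset.card Q = n →
    (∀ x ∈ P, 0 < x) → (∀ x ∈ Q, 0 < x) → P ≠ 0 → Q ≠ 0 →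
    P.sum = Q.sum →
    (∀ U D, U ≤ P → D ≤ Q → U.sum = D.sum → (U = 0 ∧ D = 0) ∨ (U = P ∧ D = Q)) →
    (Multiset.card P : ℤ) * (Multiset.card Q : ℤ) ≤ P.sum := by
  intro n
  induction n using Nat.strong_induction_on with
  | _ n IH =>
    intro P Q hn hP hQ hP0 hQ0 hsum hmin
    have hIH : ∀ P Q : Multiset ℤ, Multiset.card P + Multiset.card Q < n →
        (∀ x ∈ P, 0 < x) → (∀ x ∈ Q, 0 < x) → P ≠ 0 → Q ≠ 0 → P.sum = Q.sum →
        (∀ U D, U ≤ P → D ≤ Q → U.sum = D.sum → (U = 0 ∧ D = 0) ∨ (U = P ∧ D = Q)) →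
        (Multiset.card P : ℤ) * (Multiset.card Q : ℤ) ≤ P.sum := by
      intro P Q h
      exact IH _ h P Q rfl
    have hkpos : 0 < Multiset.card P := Multiset.card_pos.mpr hP0
    have hlpos : 0 < Multiset.card Q := Multiset.card_pos.mpr hQ0
    by_cases hk1 : Multiset.card P = 1
    · have h1 : (Multiset.card Q : ℤ) ≤ Q.sum := card_le_sum_int Q hQ
      rw [hk1, hsum]
      push_cast
      linarith
    by_cases hl1 : Multiset.card Q = 1
    · have h1 : (Multiset.card P : ℤ) ≤ P.sum := card_le_sum_int P hP
      rw [hl1]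
      push_cast
      linarith
    have hk2 : 2 ≤ Multiset.card P := by omega
    have hl2 : 2 ≤ Multiset.card Q := by omega
    obtain ⟨pm, hpmP, hpmax⟩ := exists_max_int P hP0
    obtain ⟨qm, hqmQ, hqmax⟩ := exists_max_int Q hQ0
    have hne : pm ≠ qm := by
      intro h
      rcases hmin {pm} {qm} (Multiset.singleton_le.mpr hpmP) (Multiset.singleton_le.mpr hqmQ)
        (by rw [h]) with ⟨h1, _⟩ | ⟨h1, h2⟩
      · simp at h1
      · have := congrArg Multiset.card h1
        simp at this
        omega
    rcases lt_or_gt_of_ne hne with hlt | hlt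
    · -- pm < qm : swap roles
      have hmin' : ∀ U D, U ≤ Q → D ≤ P → U.sum = D.sum →
          (U = 0 ∧ D = 0) ∨ (U = Q ∧ D = P) := by
        intro U D hU hD h
        rcases hmin D U hD hU h.symm with ⟨h1, h2⟩ | ⟨h1, h2⟩
        · exact Or.inl ⟨h2, h1⟩
        · exact Or.inr ⟨h2, h1⟩
      have := key_step n hIH Q P (by omega) hQ hP hsum.symm hmin' hl2 hk2
        qm pm hqmQ hpmP hpmax hlt
      calc (Multiset.card P : ℤ) * (Multiset.card Q : ℤ)
          = (Multiset.card Q : ℤ) * (Multiset.card P : ℤ) := by ring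
        _ ≤ Q.sum := this
        _ = P.sum := hsum.symm
    · exact key_step n hIH P Q hn hP hQ hsum hmin hk2 hl2 pm qm hpmP hqmQ hqmax hlt

/-- From the key inequality and the bounds, deduce the exact structure. -/
private lemma main_aux (m : ℕ) (hm : 2 ≤ m) (P Q : Multiset ℤ)
    (hP : ∀ x ∈ P, 0 < x) (hQ : ∀ x ∈ Q, 0 < x)
    (hPm : ∀ x ∈ P, x ≤ (m : ℤ)) (hQm : ∀ x ∈ Q, x ≤ (m : ℤ) - 1)
    (hkl : Multiset.card P + Multiset.card Q = 2 * m - 1)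
    (hsum : P.sum = Q.sum)
    (hkey : (Multiset.card P : ℤ) * (Multiset.card Q : ℤ) ≤ P.sum)
    (hP0 : P ≠ 0) (hQ0 : Q ≠ 0) :
    P = Multiset.replicate (m - 1) (m : ℤ) ∧ Q = Multiset.replicate m ((m : ℤ) - 1) := by
  have hkpos : 0 < Multiset.card P := Multiset.card_pos.mpr hP0
  have hlpos : 0 < Multiset.card Q := Multiset.card_pos.mpr hQ0
  set k := Multiset.card P with hkdef
  set l := Multiset.card Q with hldef
  have hm' : (2 : ℤ) ≤ (m : ℤ) := by exact_mod_cast hm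
  have hs1 : P.sum ≤ (k : ℤ) * m := sum_le_card_mul_int P m hPm
  have hs2 : P.sum ≤ (l : ℤ) * ((m : ℤ) - 1) := by
    rw [hsum]; exact sum_le_card_mul_int Q _ hQm
  have hkZ : (0 : ℤ) < k := by exact_mod_cast hkpos
  have hlZ : (0 : ℤ) < l := by exact_mod_cast hlpos
  -- k ≤ m - 1 and l ≤ m
  have hk_le : (k : ℤ) ≤ (m : ℤ) - 1 := by nlinarith
  have hl_le : (l : ℤ) ≤ (m : ℤ) := by nlinarith
  have hk_eq : k = m - 1 := by omega
  have hl_eq : l = m := by omega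
  have hkZ' : (k : ℤ) = (m : ℤ) - 1 := by
    rw [hk_eq]; push_cast [Nat.cast_sub (by omega : 1 ≤ m)]; ring
  have hlZ' : (l : ℤ) = (m : ℤ) := by rw [hl_eq]
  -- σ = (m-1) * m exactly
  have hsig : P.sum = ((m : ℤ) - 1) * m := by
    have h1 : ((m:ℤ) - 1) * m ≤ P.sum := by
      calc ((m:ℤ) - 1) * m = (k : ℤ) * (l : ℤ) := by rw [hkZ', hlZ']
        _ ≤ P.sum := hkey
    have h2 : P.sum ≤ ((m:ℤ) - 1) * m := by rw [← hkZ']; exact_mod_cast hs1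
    omega
  -- all elements of P equal m
  have hPall : ∀ x ∈ P, x = (m : ℤ) := by
    intro x hx
    by_contra hne
    have hxm : x < (m : ℤ) := lt_of_le_of_ne (hPm x hx) hne
    have hcons : x ::ₘ P.erase x = P := Multiset.cons_erase hx
    have hsumE : x + (P.erase x).sum = P.sum := by
      conv_rhs => rw [← hcons]
      rw [Multiset.sum_cons]
    have hbound : (P.erase x).sum ≤ ((Multiset.card (P.erase x)) : ℤ) * m :=
      sum_le_card_mul_int _ _ (fun y hy => hPm y (Multiset.mem_of_mem_erase hy))
    have hcardE : Multiset.card (P.erase x) = k - 1 := by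
      rw [hkdef]; exact Multiset.card_erase_of_mem hx
    rw [hcardE] at hbound
    have hcE : ((k - 1 : ℕ) : ℤ) = (m : ℤ) - 2 := by
      have : k - 1 = m - 2 := by omega
      rw [this]; push_cast [Nat.cast_sub (by omega : 2 ≤ m)]; ring
    rw [hcE] at hbound
    nlinarith
  have hQall : ∀ x ∈ Q, x = (m : ℤ) - 1 := by
    intro x hx
    by_contra hne
    have hxm : x < (m : ℤ) - 1 := lt_of_le_of_ne (hQm x hx) hne
    have hcons : x ::ₘ Q.erase x = Q := Multiset.cons_erase hx
    have hsumE : x + (Q.erase x).sum = Q.sum := by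
      conv_rhs => rw [← hcons]
      rw [Multiset.sum_cons]
    have hbound : (Q.erase x).sum ≤ ((Multiset.card (Q.erase x)) : ℤ) * ((m:ℤ) - 1) :=
      sum_le_card_mul_int _ _ (fun y hy => hQm y (Multiset.mem_of_mem_erase hy))
    have hcardE : Multiset.card (Q.erase x) = l - 1 := by
      rw [hldef]; exact Multiset.card_erase_of_mem hx
    rw [hcardE] at hbound
    have hcE : ((l - 1 : ℕ) : ℤ) = (m : ℤ) - 1 := by
      have : l - 1 = m - 1 := by omega
      rw [this]; push_cast [Nat.cast_sub (by omega : 1 ≤ m)]; ring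
    rw [hcE] at hbound
    have hQsum : Q.sum = ((m:ℤ) - 1) * m := by rw [← hsum]; exact hsig
    nlinarith
  constructor
  · have := (Multiset.eq_replicate_card).mpr hPall
    rwa [← hkdef, hk_eq] at this
  · have := (Multiset.eq_replicate_card).mpr hQall
    rwa [← hldef, hl_eq] at this

/-- Minimality of the extremal sequences. -/
private lemma rep_min (m : ℕ) (hm : 2 ≤ m) (u v : ℤ)
    (hcase : (u = (m : ℤ) ∧ v = -((m : ℤ) - 1)) ∨ (u = -(m : ℤ) ∧ v = (m : ℤ) - 1)) :
    ∀ t, t < (Multiset.replicate (m - 1) u + Multiset.replicate m v : Multiset ℤ) →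
      t ≠ 0 → t.sum ≠ 0 := by
  classical
  intro t ht ht0 htsum
  set S : Multiset ℤ := Multiset.replicate (m - 1) u + Multiset.replicate m v with hSdef
  have hm' : (2 : ℤ) ≤ (m : ℤ) := by exact_mod_cast hm
  have huv : u ≠ v := by
    rcases hcase with ⟨rfl, rfl⟩ | ⟨rfl, rfl⟩ <;> intro h <;> omega
  have htle : t ≤ S := le_of_lt ht
  -- decompose t
  have hsplit : t.filter (· = u) + t.filter (fun x => ¬ x = u) = t :=
    Multiset.filter_add_not _ t
  set a := Multiset.card (t.filter (· = u)) with hadef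
  set b := Multiset.card (t.filter (fun x => ¬ x = u)) with hbdef
  have hrep1 : t.filter (· = u) = Multiset.replicate a u := by
    rw [hadef]
    exact (Multiset.eq_replicate_card).mpr (fun x hx => (Multiset.mem_filter.mp hx).2)
  have hmemS : ∀ x ∈ t, x = u ∨ x = v := by
    intro x hx
    have := Multiset.mem_of_le htle hx
    rw [hSdef, Multiset.mem_add] at this
    rcases this with h | h
    · exact Or.inl (Multiset.eq_of_mem_replicate h)
    · exact Or.inr (Multiset.eq_of_mem_replicate h)
  have hrep2 : t.filter (fun x => ¬ x = u) = Multiset.replicate b v := by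
    rw [hbdef]
    refine (Multiset.eq_replicate_card).mpr (fun x hx => ?_)
    have hxt := Multiset.mem_of_mem_filter hx
    have hxnu : ¬ x = u := (Multiset.mem_filter.mp hx).2
    rcases hmemS x hxt with h | h
    · exact absurd h hxnu
    · exact h
  -- counts bounds
  have hcountu : Multiset.count u S = m - 1 := by
    rw [hSdef]
    rw [Multiset.count_add, Multiset.count_replicate, Multiset.count_replicate]
    simp [huv.symm, Ne.symm huv]
  have hcountv : Multiset.count v S = m := by
    rw [hSdef]
    rw [Multiset.count_add, Multiset.count_replicate, Multiset.count_replicate]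
    simp [huv]
  have ha_le : a ≤ m - 1 := by
    have h1 : Multiset.replicate a u ≤ t := hrep1 ▸ Multiset.filter_le _ t
    have h2 : Multiset.replicate a u ≤ S := h1.trans htle
    have := Multiset.le_count_iff_replicate_le.mpr h2
    omega
  have hb_le : b ≤ m := by
    have h1 : Multiset.replicate b v ≤ t := hrep2 ▸ Multiset.filter_le _ t
    have h2 : Multiset.replicate b v ≤ S := h1.trans htle
    have := Multiset.le_count_iff_replicate_le.mpr h2
    omega
  -- sum equation
  have htsum2 : (a : ℤ) * u + (b : ℤ) * v = 0 := by
    have : t.sum = (Multiset.replicate a u).sum + (Multiset.replicate b v).sum := by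
      conv_lhs => rw [← hsplit]
      rw [Multiset.sum_add, hrep1, hrep2]
    rw [Multiset.sum_replicate, Multiset.sum_replicate] at this
    simp only [nsmul_eq_mul] at this
    rw [htsum] at this
    omega
  have hab : (a : ℤ) * m = (b : ℤ) * ((m : ℤ) - 1) := by
    rcases hcase with ⟨rfl, rfl⟩ | ⟨rfl, rfl⟩ <;> nlinarith [htsum2]
  have habn : a * m = b * (m - 1) := by
    have h1 : ((a * m : ℕ) : ℤ) = ((b * (m - 1) : ℕ) : ℤ) := by
      push_cast [Nat.cast_sub (by omega : 1 ≤ m)]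
      linarith [hab]
    exact_mod_cast h1
  -- m ∣ b
  have hco : Nat.Coprime m (m - 1) := by
    have hd : Nat.gcd m (m - 1) ∣ 1 := by
      have h1 := Nat.dvd_sub (Nat.gcd_dvd_left m (m - 1)) (Nat.gcd_dvd_right m (m - 1))
      rwa [show m - (m - 1) = 1 from by omega] at h1
    exact Nat.dvd_one.mp hd
  have hdvd : m ∣ b := by
    refine hco.dvd_of_dvd_mul_right ⟨a, ?_⟩
    rw [← habn]; ring
  obtain ⟨c, hc⟩ := hdvd
  have hc_le : c ≤ 1 := by
    by_contra hcc
    push_neg at hcc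
    have h2 : m * 2 ≤ m * c := Nat.mul_le_mul_left m hcc
    omega
  interval_cases c
  · -- b = 0, so a = 0, so t = 0
    have hb0 : b = 0 := by omega
    have ha0 : a = 0 := by
      rw [hb0] at habn
      simp only [Nat.zero_mul] at habn
      rcases Nat.mul_eq_zero.mp habn with h | h
      · exact h
      · omega
    apply ht0
    rw [← hsplit, hrep1, hrep2, ha0, hb0]
    simp
  · -- b = m, so a = m - 1, so t = S
    have hbm : b = m := by omega
    have ha_eq : a = m - 1 := by
      have h1 : a * m = (m - 1) * m := by rw [habn, hbm]; ring
      exact Nat.eq_of_mul_eq_mul_right (by omega) h1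
    have hcardt : Multiset.card t = 2 * m - 1 := by
      rw [← hsplit]
      rw [Multiset.card_add, hrep1, hrep2, Multiset.card_replicate, Multiset.card_replicate]
      omega
    have hcardS : Multiset.card S = 2 * m - 1 := by
      rw [hSdef, Multiset.card_add, Multiset.card_replicate, Multiset.card_replicate]
      omega
    have : t = S := Multiset.eq_of_le_of_card_le htle (by omega)
    rw [this] at ht
    exact lt_irrefl _ ht

theorem inverse_maximal_length_symmetric (m : ℕ) (hm : 2 ≤ m) (s : Multiset ℤ)
    (hmem : ∀ x ∈ s, x ∈ Set.Icc (-(m : ℤ)) m) (hsum : s.sum = 0)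
    (hcard : Multiset.card s = 2 * m - 1) :
    IsMinZeroSumSeq (Set.Icc (-(m : ℤ)) m) s ↔
      s = Multiset.replicate (m - 1) (m : ℤ) + Multiset.replicate m (-((m : ℤ) - 1)) ∨
      s = Multiset.replicate (m - 1) (-(m : ℤ)) + Multiset.replicate m ((m : ℤ) - 1) := by
  classical
  have hm' : (2 : ℤ) ≤ (m : ℤ) := by exact_mod_cast hm
  constructor
  · rintro ⟨hne, -, -, hminimal⟩
    -- split s into positive and nonpositive parts
    set P : Multiset ℤ := s.filter (fun x => 0 < x) with hPdef
    set N : Multiset ℤ := s.filter (fun x => ¬ 0 < x) with hNdef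
    have hsplit : P + N = s := Multiset.filter_add_not _ s
    -- 0 is not in s
    have h0 : (0 : ℤ) ∉ s := by
      intro h0s
      have hle : ({0} : Multiset ℤ) ≤ s := Multiset.singleton_le.mpr h0s
      have hne1 : ({0} : Multiset ℤ) ≠ s := by
        intro h
        have := congrArg Multiset.card h
        simp [hcard] at this
        omega
      exact hminimal {0} (lt_of_le_of_ne hle hne1) (by simp) (by simp)
    have hPpos : ∀ x ∈ P, 0 < x := by
      intro x hx
      rw [hPdef] at hx
      exact (Multiset.mem_filter.mp hx).2
    have hNneg : ∀ x ∈ N, x < 0 := by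
      intro x hx
      rw [hNdef] at hx
      have h1 : ¬ 0 < x := (Multiset.mem_filter.mp hx).2
      have h2 : x ∈ s := Multiset.mem_of_mem_filter hx
      have h3 : x ≠ 0 := fun h => h0 (h ▸ h2)
      omega
    set Q : Multiset ℤ := N.map (fun x => -x) with hQdef
    have hQN : Q.map (fun x => -x) = N := by
      rw [hQdef, Multiset.map_map]
      simp
    have hQpos : ∀ x ∈ Q, 0 < x := by
      intro x hx
      rw [hQdef, Multiset.mem_map] at hx
      obtain ⟨y, hy, rfl⟩ := hx
      have := hNneg y hy
      omega
    have hNsum : N.sum = -Q.sum := by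
      rw [hQdef, sum_map_neg_int]
      ring
    have hsumPN : P.sum + N.sum = 0 := by
      rw [← Multiset.sum_add, hsplit, hsum]
    have hsumPQ : P.sum = Q.sum := by omega
    have hcardPQ : Multiset.card P + Multiset.card Q = 2 * m - 1 := by
      have h1 : Multiset.card Q = Multiset.card N := by rw [hQdef, Multiset.card_map]
      have h2 := congrArg Multiset.card hsplit
      rw [Multiset.card_add] at h2
      omega
    -- nonemptiness
    have hP0 : P ≠ 0 := by
      intro h
      have hQsum0 : Q.sum = 0 := by rw [← hsumPQ, h]; simp
      have hQcard : Multiset.card Q = 2 * m - 1 := by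
        rw [h] at hcardPQ; simpa using hcardPQ
      have hle := card_le_sum_int Q hQpos
      rw [hQsum0] at hle
      omega
    have hQ0 : Q ≠ 0 := by
      intro h
      have hPsum0 : P.sum = 0 := by rw [hsumPQ, h]; simp
      have hPcard : Multiset.card P = 2 * m - 1 := by
        rw [h] at hcardPQ; simpa using hcardPQ
      have hle := card_le_sum_int P hPpos
      rw [hPsum0] at hle
      omega
    -- no common proper subsums
    have hnc : ∀ U D, U ≤ P → D ≤ Q → U.sum = D.sum →
        (U = 0 ∧ D = 0) ∨ (U = P ∧ D = Q) := by
      intro U D hU hD hUD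
      set t : Multiset ℤ := U + D.map (fun x => -x) with htdef
      have htle : t ≤ s := by
        rw [← hsplit]
        exact add_le_add hU ((Multiset.map_le_map hD).trans (le_of_eq hQN))
      have hmapsum : (D.map (fun x => -x)).sum = -D.sum := sum_map_neg_int D
      have htsum : t.sum = 0 := by
        rw [htdef, Multiset.sum_add, hmapsum, hUD]
        ring
      by_cases ht0 : t = 0
      · left
        rw [htdef] at ht0
        have hU0 : U = 0 := by
          have : U ≤ (0 : Multiset ℤ) := ht0 ▸ le_add_right U _
          simpa using this
        have hD0 : D.map (fun x => -x) = 0 := by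
          have : D.map (fun x => -x) ≤ (0 : Multiset ℤ) := ht0 ▸ le_add_left _ U
          simpa using this
        exact ⟨hU0, by simpa using hD0⟩
      · have hts : t = s := by
          by_contra hne2
          exact hminimal t (lt_of_le_of_ne htle hne2) ht0 htsum
        right
        have hfilter := congrArg (Multiset.filter (fun x => 0 < x)) hts
        rw [htdef, Multiset.filter_add] at hfilter
        have h1 : U.filter (fun x => 0 < x) = U :=
          Multiset.filter_eq_self.mpr (fun x hx => hPpos x (Multiset.mem_of_le hU hx))
        have h2 : (D.map (fun x => -x)).filter (fun x => 0 < x) = 0 := by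
          rw [Multiset.filter_eq_nil]
          intro a ha
          rw [Multiset.mem_map] at ha
          obtain ⟨y, hy, rfl⟩ := ha
          have := hQpos y (Multiset.mem_of_le hD hy)
          omega
        rw [h1, h2, add_zero] at hfilter
        constructor
        · exact hfilter
        · have hfilter2 := congrArg (Multiset.filter (fun x => ¬ 0 < x)) hts
          rw [htdef, Multiset.filter_add] at hfilter2
          have h3 : U.filter (fun x => ¬ 0 < x) = 0 := by
            rw [Multiset.filter_eq_nil]
            intro a ha
            exact not_not_intro (hPpos a (Multiset.mem_of_le hU ha))
          have h4 : (D.map (fun x => -x)).filter (fun x => ¬ 0 < x) = D.map (fun x => -x) := by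
            refine Multiset.filter_eq_self.mpr (fun x hx => ?_)
            rw [Multiset.mem_map] at hx
            obtain ⟨y, hy, rfl⟩ := hx
            have := hQpos y (Multiset.mem_of_le hD hy)
            omega
          rw [h3, h4, zero_add] at hfilter2
          rw [hQdef, hNdef, ← hfilter2, Multiset.map_map]
          simp
    -- key inequality
    have hkey := key_lemma (Multiset.card P + Multiset.card Q) P Q rfl hPpos hQpos hP0 hQ0
      hsumPQ hnc
    -- bounds on elements
    have hPm : ∀ x ∈ P, x ≤ (m : ℤ) := fun x hx =>
      (hmem x (Multiset.mem_of_mem_filter hx)).2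
    have hQm : ∀ x ∈ Q, x ≤ (m : ℤ) := by
      intro x hx
      rw [hQdef, Multiset.mem_map] at hx
      obtain ⟨y, hy, rfl⟩ := hx
      have := (hmem y (Multiset.mem_of_mem_filter hy)).1
      omega
    have hnotboth : ¬ ((m : ℤ) ∈ P ∧ (m : ℤ) ∈ Q) := by
      rintro ⟨h1, h2⟩
      rcases hnc {(m : ℤ)} {(m : ℤ)} (Multiset.singleton_le.mpr h1)
        (Multiset.singleton_le.mpr h2) rfl with ⟨h3, -⟩ | ⟨h3, h4⟩
      · simp at h3
      · have c1 := congrArg Multiset.card h3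
        have c2 := congrArg Multiset.card h4
        simp at c1 c2
        omega
    by_cases hmQ : (m : ℤ) ∈ Q
    · -- second case: -m appears in s
      have hmP : (m : ℤ) ∉ P := fun h => hnotboth ⟨h, hmQ⟩
      have hPm' : ∀ x ∈ P, x ≤ (m : ℤ) - 1 := by
        intro x hx
        have h1 := hPm x hx
        have h2 : x ≠ (m : ℤ) := fun h => hmP (h ▸ hx)
        omega
      have hnc' : ∀ U D, U ≤ Q → D ≤ P → U.sum = D.sum →
          (U = 0 ∧ D = 0) ∨ (U = Q ∧ D = P) := by
        intro U D hU hD h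
        rcases hnc D U hD hU h.symm with ⟨h1, h2⟩ | ⟨h1, h2⟩
        · exact Or.inl ⟨h2, h1⟩
        · exact Or.inr ⟨h2, h1⟩
      have hkey' := key_lemma (Multiset.card Q + Multiset.card P) Q P rfl hQpos hPpos hQ0 hP0
        hsumPQ.symm hnc'
      have hmain := main_aux m hm Q P hQpos hPpos hQm hPm' (by omega) hsumPQ.symm hkey' hQ0 hP0
      obtain ⟨hQrep, hPrep⟩ := hmain
      right
      have hNrep : N = Multiset.replicate (m - 1) (-(m : ℤ)) := by
        rw [← hQN, hQrep, Multiset.map_replicate]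
      rw [← hsplit, hPrep, hNrep, add_comm]
    · -- first case
      have hQm' : ∀ x ∈ Q, x ≤ (m : ℤ) - 1 := by
        intro x hx
        have h1 := hQm x hx
        have h2 : x ≠ (m : ℤ) := fun h => hmQ (h ▸ hx)
        omega
      have hmain := main_aux m hm P Q hPpos hQpos hPm hQm' hcardPQ hsumPQ hkey hP0 hQ0
      obtain ⟨hPrep, hQrep⟩ := hmain
      left
      have hNrep : N = Multiset.replicate m (-((m : ℤ) - 1)) := by
        rw [← hQN, hQrep, Multiset.map_replicate]
      rw [← hsplit, hPrep, hNrep]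
  · intro h
    refine ⟨?_, hmem, hsum, ?_⟩
    · intro h0
      rw [h0] at hcard
      simp at hcard
      omega
    · rcases h with h | h
      · rw [h]
        intro t ht ht0
        exact rep_min m hm (m : ℤ) (-((m : ℤ) - 1)) (Or.inl ⟨rfl, rfl⟩) t ht ht0
      · rw [h]
        intro t ht ht0
        exact rep_min m hm (-(m : ℤ)) ((m : ℤ) - 1) (Or.inr ⟨rfl, rfl⟩) t ht ht0
end

section
/- D(⟦−1, 1⟧²) = 4; that is, the maximal length of a minimal zero-sum sequence over the set {−1, 0, 1}² ⊂ ℤ² is 4. -/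
open Multiset

lemma le2' {α} [DecidableEq α] {u v : α} {s : Multiset α} (huv : u ≠ v)
    (hu : 1 ≤ s.count u) (hv : 1 ≤ s.count v) : ({u, v} : Multiset α) ≤ s := by
  rw [le_iff_count]
  intro x
  rw [show ({u, v} : Multiset α) = u ::ₘ {v} from rfl, count_cons, count_singleton]
  split_ifs <;> subst_vars <;> simp_all

lemma le3' {α} [DecidableEq α] {u v w : α} {s : Multiset α} (huv : u ≠ v) (huw : u ≠ w)
    (hvw : v ≠ w) (hu : 1 ≤ s.count u) (hv : 1 ≤ s.count v) (hw : 1 ≤ s.count w) :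
    ({u, v, w} : Multiset α) ≤ s := by
  rw [le_iff_count]
  intro x
  rw [show ({u, v, w} : Multiset α) = u ::ₘ v ::ₘ {w} from rfl, count_cons, count_cons,
    count_singleton]
  split_ifs <;> subst_vars <;> simp_all

lemma le4' {α} [DecidableEq α] {u v w : α} {s : Multiset α} (huv : u ≠ v) (huw : u ≠ w)
    (hvw : v ≠ w) (hu : 2 ≤ s.count u) (hv : 1 ≤ s.count v) (hw : 1 ≤ s.count w) :
    ({u, u, v, w} : Multiset α) ≤ s := by
  rw [le_iff_count]
  intro x
  rw [show ({u, u, v, w} : Multiset α) = u ::ₘ u ::ₘ v ::ₘ {w} from rfl, count_cons, count_cons,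
    count_cons, count_singleton]
  split_ifs <;> subst_vars <;> simp_all

lemma decomp (s : Multiset (ℤ × ℤ))
    (hX : ∀ x ∈ s, x ∈ (Set.Icc (-1 : ℤ) 1) ×ˢ (Set.Icc (-1 : ℤ) 1)) :
    (card s : ℤ) = s.count (0,0) + s.count (1,0) + s.count (-1,0) + s.count (0,1)
        + s.count (0,-1) + s.count (1,1) + s.count (-1,-1) + s.count (1,-1) + s.count (-1,1)
      ∧ s.sum.1 = (s.count (1,0) + s.count (1,1) + s.count (1,-1) : ℤ)
        - (s.count (-1,0) + s.count (-1,1) + s.count (-1,-1))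
      ∧ s.sum.2 = (s.count (0,1) + s.count (1,1) + s.count (-1,1) : ℤ)
        - (s.count (0,-1) + s.count (-1,-1) + s.count (1,-1)) := by
  induction s using Multiset.induction with
  | empty => simp
  | cons a s ih =>
    have ha := hX a (mem_cons_self a s)
    obtain ⟨x, y⟩ := a
    simp only [Set.mem_prod, Set.mem_Icc] at ha
    obtain ⟨⟨hx1, hx2⟩, ⟨hy1, hy2⟩⟩ := ha
    obtain ⟨h1, h2, h3⟩ := ih (fun z hz => hX z (mem_cons_of_mem hz))
    refine ⟨?_, ?_, ?_⟩ <;>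
      simp only [sum_cons, Multiset.card_cons, count_cons, Prod.mk.injEq, Prod.fst_add,
        Prod.snd_add, h1, h2, h3] <;>
      push_cast <;>
      interval_cases x <;> interval_cases y <;>
      norm_num [-Prod.mk_zero_zero, -Prod.mk_one_one] <;> omega

set_option maxHeartbeats 1000000 in
lemma card_le_four (s : Multiset (ℤ × ℤ))
    (h : IsMinZeroSumSeq ((Set.Icc (-1 : ℤ) 1) ×ˢ (Set.Icc (-1 : ℤ) 1)) s) :
    card s ≤ 4 := by
  obtain ⟨hne, hX, hsum, hmin⟩ := h
  by_contra hcard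
  push_neg at hcard
  -- a sub-multiset of small support yields a contradiction with minimality
  have forb : ∀ t : Multiset (ℤ × ℤ), t ≤ s → card t ≤ 4 → t ≠ 0 → t.sum = 0 → False := by
    intro t hle hc ht0 hts
    exact hmin t (lt_of_le_of_ne hle (fun e => by rw [e] at hc; omega)) ht0 hts
  obtain ⟨h1, h2, h3⟩ := decomp s hX
  rw [hsum] at h2 h3
  simp only [Prod.fst_zero, Prod.snd_zero] at h2 h3
  -- no (0,0)
  have c0 : s.count (0,0) = 0 := by
    by_contra hc
    exact forb {(0,0)} (singleton_le.mpr (count_pos.mp (Nat.pos_of_ne_zero hc)))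
      (by simp) (by simp) (by decide)
  -- antipodal pairs
  have A : ∀ u v : ℤ × ℤ, u ≠ v → u + v = 0 →
      s.count u = 0 ∨ s.count v = 0 := by
    intro u v huv hsum0
    by_contra hc
    push_neg at hc
    exact forb {u, v} (le2' huv (Nat.one_le_iff_ne_zero.mpr hc.1)
      (Nat.one_le_iff_ne_zero.mpr hc.2)) (by simp) (by simp)
      (by simp [hsum0])
  have a1 := A (1,0) (-1,0) (by decide) (by decide)
  have a2 := A (0,1) (0,-1) (by decide) (by decide)
  have a3 := A (1,1) (-1,-1) (by decide) (by decide)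
  have a4 := A (1,-1) (-1,1) (by decide) (by decide)
  -- zero-sum triples
  have T : ∀ u v w : ℤ × ℤ, u ≠ v → u ≠ w → v ≠ w → u + v + w = 0 →
      s.count u = 0 ∨ s.count v = 0 ∨ s.count w = 0 := by
    intro u v w huv huw hvw hsum0
    by_contra hc
    push_neg at hc
    exact forb {u, v, w} (le3' huv huw hvw (Nat.one_le_iff_ne_zero.mpr hc.1)
      (Nat.one_le_iff_ne_zero.mpr hc.2.1) (Nat.one_le_iff_ne_zero.mpr hc.2.2))
      (by simp) (by simp) (by simp [← add_assoc, hsum0])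
  have t1 := T (1,0) (0,1) (-1,-1) (by decide) (by decide) (by decide) (by decide)
  have t2 := T (1,0) (0,-1) (-1,1) (by decide) (by decide) (by decide) (by decide)
  have t3 := T (-1,0) (0,1) (1,-1) (by decide) (by decide) (by decide) (by decide)
  have t4 := T (-1,0) (0,-1) (1,1) (by decide) (by decide) (by decide) (by decide)
  -- zero-sum quadruples 2u + v + w
  have Q : ∀ u v w : ℤ × ℤ, u ≠ v → u ≠ w → v ≠ w → u + u + v + w = 0 →
      s.count u ≤ 1 ∨ s.count v = 0 ∨ s.count w = 0 := by
    intro u v w huv huw hvw hsum0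
    by_contra hc
    push_neg at hc
    exact forb {u, u, v, w} (le4' huv huw hvw hc.1 (Nat.one_le_iff_ne_zero.mpr hc.2.1)
      (Nat.one_le_iff_ne_zero.mpr hc.2.2))
      (by simp) (by simp) (by simp [← add_assoc, hsum0])
  have q1 := Q (1,0) (-1,1) (-1,-1) (by decide) (by decide) (by decide) (by decide)
  have q2 := Q (-1,0) (1,1) (1,-1) (by decide) (by decide) (by decide) (by decide)
  have q3 := Q (0,1) (1,-1) (-1,-1) (by decide) (by decide) (by decide) (by decide)
  have q4 := Q (0,-1) (1,1) (-1,1) (by decide) (by decide) (by decide) (by decide)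
  rcases a1 with a1|a1 <;> rcases a2 with a2|a2 <;> rcases a3 with a3|a3 <;> rcases a4 with a4|a4 <;> omega

theorem davenport_unit_square :
    davenport ((Set.Icc (-1 : ℤ) 1) ×ˢ (Set.Icc (-1 : ℤ) 1)) = 4 := by
  apply le_antisymm
  · refine iSup_le fun s => iSup_le fun hs => ?_
    exact_mod_cast Nat.cast_le.mpr (card_le_four s hs)
  · have h0 : IsMinZeroSumSeq ((Set.Icc (-1 : ℤ) 1) ×ˢ (Set.Icc (-1 : ℤ) 1))
        ({((1:ℤ),(0:ℤ)), (1,0), (-1,1), (-1,-1)} : Multiset (ℤ × ℤ)) := by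
      refine ⟨by decide, ?_, by decide, ?_⟩
      · intro x hx
        fin_cases hx <;> refine ⟨⟨?_, ?_⟩, ?_, ?_⟩ <;> norm_num
      · have key : ∀ t ∈ ({((1:ℤ),(0:ℤ)), (1,0), (-1,1), (-1,-1)} : Multiset (ℤ × ℤ)).powerset,
            t ≠ ({((1:ℤ),(0:ℤ)), (1,0), (-1,1), (-1,-1)} : Multiset (ℤ × ℤ)) → t ≠ 0 →
            t.sum ≠ 0 := by decide
        intro t ht ht0
        exact key t (mem_powerset.mpr ht.le) ht.ne ht0
    calc (4 : ℕ∞) = (card ({((1:ℤ),(0:ℤ)), (1,0), (-1,1), (-1,-1)} : Multiset (ℤ × ℤ)) : ℕ∞) := by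
          decide
      _ ≤ davenport ((Set.Icc (-1 : ℤ) 1) ×ˢ (Set.Icc (-1 : ℤ) 1)) := le_iSup₂ (f := fun (s : Multiset (ℤ × ℤ)) (_ : IsMinZeroSumSeq ((Set.Icc (-1 : ℤ) 1) ×ˢ (Set.Icc (-1 : ℤ) 1)) s) => (card s : ℕ∞)) _ h0
end

section
/- Let m be a positive integer and let G be a finite cyclic group. Then D(G × ⟦−m, m⟧) = D(G) · D(⟦−m, m⟧), where G × ⟦−m, m⟧ is regarded as a subset of the abelian group G × ℤ. -/
open Multiset

namespace DavAux

section Basic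

variable {A : Type*} [AddCommGroup A]

lemma lt_of_le_of_card_lt {s t : Multiset A} (h : t ≤ s)
    (hc : Multiset.card t < Multiset.card s) : t < s :=
  lt_of_le_of_ne h (fun he => absurd (congrArg Multiset.card he) (Nat.ne_of_lt hc))

lemma sum_sub_of_le [DecidableEq A] {s t : Multiset A} (h : t ≤ s) : (s - t).sum = s.sum - t.sum := by
  have h2 : s - t + t = s := tsub_add_cancel_of_le h
  have h3 := congrArg Multiset.sum h2
  rw [Multiset.sum_add] at h3
  exact eq_sub_of_add_eq h3

lemma msum_nonpos {r : Multiset ℤ} (h : ∀ x ∈ r, x ≤ 0) : r.sum ≤ 0 := by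
  induction r using Multiset.induction with
  | empty => simp
  | cons a t ih =>
    rw [Multiset.sum_cons]
    have h1 := h a (Multiset.mem_cons_self a t)
    have h2 := ih (fun x hx => h x (Multiset.mem_cons_of_mem hx))
    omega

/-- Any nonempty zero-sum multiset over `X` contains a minimal zero-sum sub-multiset. -/
lemma exists_min_sub (X : Set A) :
    ∀ n (s : Multiset A), Multiset.card s ≤ n → s ≠ 0 → (∀ x ∈ s, x ∈ X) → s.sum = 0 →
      ∃ t, t ≤ s ∧ IsMinZeroSumSeq X t := by
  intro n
  induction n with
  | zero =>
    intro s hc hs0 _ _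
    exact absurd (Multiset.card_eq_zero.mp (Nat.le_zero.mp hc)) hs0
  | succ n ih =>
    intro s hc hs0 hmem hsum
    by_cases hmin : ∀ t < s, t ≠ 0 → t.sum ≠ 0
    · exact ⟨s, le_refl s, hs0, hmem, hsum, hmin⟩
    · push_neg at hmin
      obtain ⟨t, hts, ht0, htsum⟩ := hmin
      have h1 : ∀ x ∈ t, x ∈ X := fun x hx => hmem x (Multiset.mem_of_le hts.le hx)
      have h2 : Multiset.card t ≤ n := by
        have := Multiset.card_lt_card hts; omega
      obtain ⟨u, hu, humin⟩ := ih t h2 ht0 h1 htsum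
      exact ⟨u, hu.trans hts.le, humin⟩

/-- Lift a sub-multiset of a mapped multiset. -/
lemma exists_le_map {α β : Type*} {f : α → β} :
    ∀ {s : Multiset α} {t : Multiset β}, t ≤ s.map f → ∃ u, u ≤ s ∧ u.map f = t := by
  classical
  intro s
  induction s using Multiset.induction with
  | empty =>
    intro t ht
    simp only [Multiset.map_zero, Multiset.le_zero] at ht
    exact ⟨0, le_rfl, by simp [ht]⟩
  | cons a s ih =>
    intro t ht
    rw [Multiset.map_cons] at ht
    by_cases hfa : f a ∈ t
    · have h1 : t.erase (f a) ≤ s.map f := by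
        have h2 := Multiset.erase_le_erase (f a) ht
        rwa [Multiset.erase_cons_head] at h2
      obtain ⟨u, hu, hut⟩ := ih h1
      exact ⟨a ::ₘ u, Multiset.cons_le_cons a hu,
        by rw [Multiset.map_cons, hut, Multiset.cons_erase hfa]⟩
    · have h1 : t ≤ s.map f := (Multiset.le_cons_of_notMem hfa).mp ht
      obtain ⟨u, hu, hut⟩ := ih h1
      exact ⟨u, hu.trans (Multiset.le_cons_self s a), hut⟩

/-- Partial sums along a list enumerating a minimal zero-sum multiset are injective. -/
lemma injective_take_sum {X : Set A} {s : Multiset A} (hs : IsMinZeroSumSeq X s)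
    {l : List A} (hl : (l : Multiset A) = s) :
    Function.Injective (fun i : Fin (Multiset.card s) => (l.take i).sum) := by
  have hlen : l.length = Multiset.card s := by rw [← hl, Multiset.coe_card]
  have key : ∀ i j : Fin (Multiset.card s), (i : ℕ) < (j : ℕ) →
      (l.take i).sum = (l.take j).sum → False := by
    intro i j hij heq
    set b : List A := (l.drop i).take (j - i) with hb
    have htj : l.take j = l.take i ++ b := by
      have : (i : ℕ) + ((j : ℕ) - i) = j := by omega
      rw [hb, ← List.take_add, this]
    have hbsum : b.sum = 0 := by
      have h3 := congrArg List.sum htj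
      rw [List.sum_append, ← heq] at h3
      exact (left_eq_add.mp h3)
    have hblen : b.length = (j : ℕ) - i := by
      rw [hb, List.length_take, List.length_drop]
      have := j.isLt
      omega
    have hb0 : b ≠ [] := by
      intro h
      rw [h] at hblen
      simp at hblen
      omega
    have hinfix : b <:+: l := by
      refine ⟨l.take i, l.drop j, ?_⟩
      rw [← htj, List.take_append_drop]
    have hble : (b : Multiset A) ≤ s := by
      rw [← hl]
      exact (Multiset.coe_le (l₁ := b) (l₂ := l)).mpr hinfix.sublist.subperm
    have hblt : (b : Multiset A) < s := by
      refine lt_of_le_of_card_lt hble ?_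
      rw [Multiset.coe_card, hblen]
      have := j.isLt
      omega
    exact hs.2.2.2 _ hblt (by simpa [Multiset.coe_eq_zero] using hb0)
      (by simpa [Multiset.sum_coe] using hbsum)
  intro i j hij
  by_contra hne
  rcases (Fin.val_ne_of_ne hne).lt_or_gt with h | h
  · exact key i j h hij
  · exact key j i h hij.symm

end Basic

section GroupBound

variable {G : Type*} [AddCommGroup G] [Fintype G]

/-- Prefix sums bound: a minimal zero-sum sequence in a finite abelian group has
length at most the cardinality of the group. -/
lemma card_le_of_min {X : Set G} {s : Multiset G} (hs : IsMinZeroSumSeq X s) :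
    Multiset.card s ≤ Fintype.card G := by
  by_contra hlt
  push_neg at hlt
  set l := s.toList with hldef
  have hl : (l : Multiset G) = s := s.coe_toList
  obtain ⟨i, j, hij, hfeq⟩ := Fintype.exists_ne_map_eq_of_card_lt
    (fun i : Fin (Multiset.card s) => (l.take i).sum) (by simpa using hlt)
  exact hij (injective_take_sum hs hl hfeq)

end GroupBound

section TwoType

variable {A : Type*} [AddCommGroup A]

lemma eq_repl_two [DecidableEq A] {x y : A} (hxy : x ≠ y) :
    ∀ (t : Multiset A), (∀ z ∈ t, z = x ∨ z = y) →
      t = Multiset.replicate (t.count x) x + Multiset.replicate (t.count y) y := by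
  intro t
  induction t using Multiset.induction with
  | empty => simp
  | cons a t ih =>
    intro h
    have ht : ∀ z ∈ t, z = x ∨ z = y := fun z hz => h z (Multiset.mem_cons_of_mem hz)
    rcases h a (Multiset.mem_cons_self a t) with rfl | rfl
    · rw [Multiset.count_cons_self, Multiset.count_cons_of_ne (Ne.symm hxy),
        Multiset.replicate_succ, Multiset.cons_add]
      exact congrArg _ (ih ht)
    · rw [Multiset.count_cons_self, Multiset.count_cons_of_ne hxy,
        Multiset.replicate_succ]
      rw [Multiset.add_cons]
      exact congrArg _ (ih ht)

lemma isMin_two (X : Set A) {x y : A} (hxy : x ≠ y) {a b : ℕ} (ha : 0 < a)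
    (hx : x ∈ X) (hy : y ∈ X) (hsum : a • x + b • y = 0)
    (hmin : ∀ c d : ℕ, c ≤ a → d ≤ b → c • x + d • y = 0 →
      (c = 0 ∧ d = 0) ∨ (c = a ∧ d = b)) :
    IsMinZeroSumSeq X (Multiset.replicate a x + Multiset.replicate b y) := by
  classical
  set s := Multiset.replicate a x + Multiset.replicate b y with hsdef
  have hcount : ∀ t : Multiset A, t ≤ s → t = Multiset.replicate (t.count x) x +
      Multiset.replicate (t.count y) y ∧ t.count x ≤ a ∧ t.count y ≤ b := by
    intro t hts
    have hmem : ∀ z ∈ t, z = x ∨ z = y := by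
      intro z hz
      have := Multiset.mem_of_le hts hz
      rw [hsdef, Multiset.mem_add] at this
      rcases this with h | h
      · exact Or.inl (Multiset.eq_of_mem_replicate h)
      · exact Or.inr (Multiset.eq_of_mem_replicate h)
    refine ⟨eq_repl_two hxy t hmem, ?_, ?_⟩
    · have := Multiset.count_le_of_le x hts
      simpa [hsdef, Multiset.count_replicate, Ne.symm hxy] using this
    · have := Multiset.count_le_of_le y hts
      simpa [hsdef, Multiset.count_replicate, hxy] using this
  refine ⟨?_, ?_, ?_, ?_⟩
  · intro h
    have := congrArg Multiset.card h
    simp only [hsdef, Multiset.card_add, Multiset.card_replicate, Multiset.card_zero] at this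
    omega
  · intro z hz
    rw [hsdef, Multiset.mem_add] at hz
    rcases hz with h | h
    · rw [Multiset.eq_of_mem_replicate h]; exact hx
    · rw [Multiset.eq_of_mem_replicate h]; exact hy
  · rw [hsdef, Multiset.sum_add, Multiset.sum_replicate, Multiset.sum_replicate]
    exact hsum
  · intro t hts ht0 htsum
    obtain ⟨htrep, hca, hcb⟩ := hcount t hts.le
    have hts2 : (t.count x) • x + (t.count y) • y = 0 := by
      rw [htrep] at htsum
      rwa [Multiset.sum_add, Multiset.sum_replicate, Multiset.sum_replicate] at htsum
    rcases hmin _ _ hca hcb hts2 with ⟨h1, h2⟩ | ⟨h1, h2⟩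
    · rw [h1, h2] at htrep
      simp at htrep
      exact ht0 htrep
    · rw [h1, h2] at htrep
      rw [← hsdef] at htrep
      exact absurd htrep (ne_of_lt hts)

lemma isMin_repl (X : Set A) {x : A} (hx : x ∈ X) {a : ℕ} (ha : 0 < a)
    (hsum : a • x = 0) (hmin : ∀ c, c ≤ a → c • x = 0 → c = 0 ∨ c = a) :
    IsMinZeroSumSeq X (Multiset.replicate a x) := by
  refine ⟨?_, ?_, ?_, ?_⟩
  · intro h
    have := congrArg Multiset.card h
    simp at this
    omega
  · intro z hz
    rw [Multiset.eq_of_mem_replicate hz]; exact hx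
  · rw [Multiset.sum_replicate]; exact hsum
  · intro t hts ht0 htsum
    obtain ⟨k, hk, rfl⟩ := (Multiset.le_replicate_iff).mp hts.le
    rw [Multiset.sum_replicate] at htsum
    rcases hmin k hk htsum with rfl | rfl
    · exact ht0 rfl
    · exact absurd rfl (ne_of_lt hts)

end TwoType

section Lambert

/-- Greedy ordering of the remainder of a minimal zero-sum integer sequence keeping
partial sums small. -/
lemma greedy {m : ℕ} {s : Multiset ℤ}
    (hs : IsMinZeroSumSeq (Set.Icc (-(m : ℤ)) m) s) :
    ∀ n (r : Multiset ℤ), Multiset.card r ≤ n → r < s → |r.sum| ≤ (m : ℤ) - 1 →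
      ∃ l : List ℤ, (l : Multiset ℤ) = r ∧
        ∀ k ≤ l.length, |(l.take k).sum - r.sum| ≤ (m : ℤ) - 1 := by
  intro n
  induction n with
  | zero =>
    intro r hc _ hv
    have hr0 : r = 0 := Multiset.card_eq_zero.mp (Nat.le_zero.mp hc)
    subst hr0
    refine ⟨[], rfl, ?_⟩
    intro k hk
    simp only [List.length_nil, Nat.le_zero] at hk
    subst hk
    simpa using hv
  | succ n ih =>
    intro r hc hrs hv
    by_cases hr0 : r = 0
    · subst hr0
      refine ⟨[], rfl, ?_⟩
      intro k hk
      simp only [List.length_nil, Nat.le_zero] at hk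
      subst hk
      simpa using hv
    · -- r ≠ 0
      have hvne : r.sum ≠ 0 := by
        intro hv0
        -- then s - r is a proper nonempty zero-sum sub-multiset of s
        have h1 : s - r ≤ s := tsub_le_self
        have hcard : Multiset.card (s - r) = Multiset.card s - Multiset.card r := by
          have h2 : s - r + r = s := tsub_add_cancel_of_le hrs.le
          have := congrArg Multiset.card h2
          rw [Multiset.card_add] at this
          omega
        have hrpos : 0 < Multiset.card r := Multiset.card_pos.mpr hr0
        have hslt : Multiset.card r < Multiset.card s := Multiset.card_lt_card hrs
        have h3 : s - r < s := DavAux.lt_of_le_of_card_lt h1 (by omega)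
        have h4 : s - r ≠ 0 := by
          intro h
          have := congrArg Multiset.card h
          rw [hcard] at this
          simp at this
          omega
        have h5 : (s - r).sum = 0 := by
          rw [DavAux.sum_sub_of_le hrs.le, hs.2.2.1, hv0, sub_zero]
        exact hs.2.2.2 _ h3 h4 h5
      rcases hvne.lt_or_gt with hneg | hpos
      ·
        -- consumed sum is -r.sum > 0, so pick x < 0.
        have hxex : ∃ x ∈ r, x < 0 := by
          by_contra hno
          push_neg at hno
          have : (0 : ℤ) ≤ r.sum := Multiset.sum_nonneg hno
          omega
        obtain ⟨x, hxr, hxneg⟩ := hxex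
        have hxs : x ∈ s := Multiset.mem_of_le hrs.le hxr
        have hxIcc := hs.2.1 x hxs
        rw [Set.mem_Icc] at hxIcc
        have hr' : r.erase x < s := lt_of_le_of_lt
          (lt_of_le_of_ne (Multiset.erase_le x r) ?hne1).le hrs
        case hne1 =>
          intro he
          have := congrArg Multiset.card he
          rw [Multiset.card_erase_of_mem hxr, Nat.pred_eq_sub_one] at this
          have := Multiset.card_pos.mpr hr0
          omega
        have hrsum : (r.erase x).sum = r.sum - x := by
          have h6 : x ::ₘ r.erase x = r := Multiset.cons_erase hxr
          have := congrArg Multiset.sum h6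
          rw [Multiset.sum_cons] at this
          omega
        have hv' : |(r.erase x).sum| ≤ (m : ℤ) - 1 := by
          rw [hrsum]
          rw [abs_le] at hv ⊢
          omega
        have hcard' : Multiset.card (r.erase x) ≤ n := by
          rw [Multiset.card_erase_of_mem hxr, Nat.pred_eq_sub_one]
          omega
        obtain ⟨l', hl', hps⟩ := ih (r.erase x) hcard' hr' hv'
        refine ⟨x :: l', ?_, ?_⟩
        · rw [← Multiset.cons_coe, hl', Multiset.cons_erase hxr]
        · intro k hk
          cases k with
          | zero => simpa using hv
          | succ k =>
            simp only [List.take_succ_cons, List.sum_cons]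
            have hk' : k ≤ l'.length := by simpa using hk
            have := hps k hk'
            rw [hrsum] at this
            have he : x + (List.take k l').sum - r.sum = (List.take k l').sum - (r.sum - x) := by
              ring
            rw [he]
            exact this
      · -- r.sum > 0 : pick a positive element
        have hxex : ∃ x ∈ r, 0 < x := by
          by_contra hno
          push_neg at hno
          have : r.sum ≤ 0 := DavAux.msum_nonpos hno
          omega
        obtain ⟨x, hxr, hxpos⟩ := hxex
        have hxs : x ∈ s := Multiset.mem_of_le hrs.le hxr
        have hxIcc := hs.2.1 x hxs
        rw [Set.mem_Icc] at hxIcc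
        have hr' : r.erase x < s := lt_of_le_of_lt
          (lt_of_le_of_ne (Multiset.erase_le x r) ?hne2).le hrs
        case hne2 =>
          intro he
          have := congrArg Multiset.card he
          rw [Multiset.card_erase_of_mem hxr, Nat.pred_eq_sub_one] at this
          have := Multiset.card_pos.mpr hr0
          omega
        have hrsum : (r.erase x).sum = r.sum - x := by
          have h6 : x ::ₘ r.erase x = r := Multiset.cons_erase hxr
          have := congrArg Multiset.sum h6
          rw [Multiset.sum_cons] at this
          omega
        have hv' : |(r.erase x).sum| ≤ (m : ℤ) - 1 := by
          rw [hrsum]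
          rw [abs_le] at hv ⊢
          omega
        have hcard' : Multiset.card (r.erase x) ≤ n := by
          rw [Multiset.card_erase_of_mem hxr, Nat.pred_eq_sub_one]
          omega
        obtain ⟨l', hl', hps⟩ := ih (r.erase x) hcard' hr' hv'
        refine ⟨x :: l', ?_, ?_⟩
        · rw [← Multiset.cons_coe, hl', Multiset.cons_erase hxr]
        · intro k hk
          cases k with
          | zero => simpa using hv
          | succ k =>
            simp only [List.take_succ_cons, List.sum_cons]
            have hk' : k ≤ l'.length := by simpa using hk
            have := hps k hk'
            rw [hrsum] at this
            have he : x + (List.take k l').sum - r.sum = (List.take k l').sum - (r.sum - x) := by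
              ring
            rw [he]
            exact this

/-- Lambert's bound: a minimal zero-sum sequence over `⟦-m, m⟧` has length at most
`max 2 (2m - 1)`. -/
lemma lambert {m : ℕ} (hm : 0 < m) {s : Multiset ℤ}
    (hs : IsMinZeroSumSeq (Set.Icc (-(m : ℤ)) m) s) :
    Multiset.card s ≤ max 2 (2 * m - 1) := by
  classical
  by_cases hall : ∀ x ∈ s, x = (m : ℤ) ∨ x = -(m : ℤ)
  · -- all elements are ±m
    have hmne : (m : ℤ) ≠ -(m : ℤ) := by omega
    have hrep := DavAux.eq_repl_two hmne s hall
    set a := s.count (m : ℤ) with hadef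
    set b := s.count (-(m : ℤ)) with hbdef
    have hsum := hs.2.2.1
    rw [hrep, Multiset.sum_add, Multiset.sum_replicate, Multiset.sum_replicate] at hsum
    have hab : a = b := by
      have : (a : ℤ) * m + (b : ℤ) * (-(m : ℤ)) = 0 := by
        simpa [nsmul_eq_mul] using hsum
      have hmpos : (0 : ℤ) < m := by exact_mod_cast hm
      nlinarith [this]
    have hcard : Multiset.card s = a + b := by
      rw [hrep]; simp
    have ha0 : a ≠ 0 := by
      intro h
      apply hs.1
      rw [hrep, ← hab, h]
      simp
    have ha1 : a ≤ 1 := by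
      by_contra hgt
      push_neg at hgt
      have ht : ((m : ℤ) ::ₘ {-(m : ℤ)}) < s := by
        have hle : ((m : ℤ) ::ₘ {-(m : ℤ)}) ≤ s := by
          rw [hrep]
          have : ((m : ℤ) ::ₘ {-(m : ℤ)}) =
              Multiset.replicate 1 (m : ℤ) + Multiset.replicate 1 (-(m : ℤ)) := by
            rfl
          rw [this]
          exact add_le_add ((Multiset.replicate_le_replicate _).mpr (by omega))
            ((Multiset.replicate_le_replicate _).mpr (by omega))
        refine DavAux.lt_of_le_of_card_lt hle ?_
        rw [hcard]
        simp
        omega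
      exact hs.2.2.2 _ ht (by simp) (by simp)
    have : a = 1 := by omega
    rw [hcard, this, ← hab, this]
    omega
  · -- some element has absolute value at most m - 1
    push_neg at hall
    obtain ⟨x₀, hx₀s, hx₀m, hx₀m'⟩ := hall
    have hx₀Icc := hs.2.1 x₀ hx₀s
    rw [Set.mem_Icc] at hx₀Icc
    have hx₀abs : |x₀| ≤ (m : ℤ) - 1 := by
      rw [abs_le]; omega
    set r := s.erase x₀ with hrdef
    have hcons : x₀ ::ₘ r = s := Multiset.cons_erase hx₀s
    have hrsum : r.sum = -x₀ := by
      have := congrArg Multiset.sum hcons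
      rw [Multiset.sum_cons, hs.2.2.1] at this
      omega
    have hrlt : r < s := by
      refine DavAux.lt_of_le_of_card_lt (Multiset.erase_le x₀ s) ?_
      rw [Multiset.card_erase_of_mem hx₀s, Nat.pred_eq_sub_one]
      have := Multiset.card_pos.mpr hs.1
      omega
    have hrv : |r.sum| ≤ (m : ℤ) - 1 := by rw [hrsum, abs_neg]; exact hx₀abs
    obtain ⟨l, hl, hps⟩ := greedy hs (Multiset.card r) r le_rfl hrlt hrv
    set L := x₀ :: l with hLdef
    have hL : (L : Multiset ℤ) = s := by
      rw [hLdef, ← Multiset.cons_coe, hl, hcons]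
    have hllen : l.length = Multiset.card r := by rw [← hl, Multiset.coe_card]
    have hLlen : L.length = Multiset.card s := by rw [← hL, Multiset.coe_card]
    have hcards : Multiset.card s = Multiset.card r + 1 := by
      rw [hrdef, Multiset.card_erase_of_mem hx₀s, Nat.pred_eq_sub_one]
      have := Multiset.card_pos.mpr hs.1
      omega
    -- injective partial sums landing in Icc (1 - m) (m - 1)
    have hinj := DavAux.injective_take_sum hs hL
    have hmaps : ∀ i : Fin (Multiset.card s),
        (L.take i).sum ∈ Finset.Icc (1 - (m : ℤ)) ((m : ℤ) - 1) := by
      intro i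
      rcases Nat.eq_zero_or_pos i with h0 | hpos
      · rw [h0]
        simp
        omega
      · obtain ⟨k, hk⟩ : ∃ k, (i : ℕ) = k + 1 := ⟨(i : ℕ) - 1, by omega⟩
        rw [hk, hLdef]
        simp only [List.take_succ_cons, List.sum_cons]
        have hklen : k ≤ l.length := by
          have h1 := i.isLt
          omega
        have := hps k hklen
        rw [hrsum] at this
        rw [Finset.mem_Icc]
        rw [abs_le] at this
        omega
    have hcard_le : Multiset.card s ≤ (Finset.Icc (1 - (m : ℤ)) ((m : ℤ) - 1)).card := by
      have h1 : (Finset.univ : Finset (Fin (Multiset.card s))).card ≤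
          (Finset.Icc (1 - (m : ℤ)) ((m : ℤ) - 1)).card := by
        apply Finset.card_le_card_of_injOn (fun i : Fin (Multiset.card s) => (L.take i).sum)
        · intro i _
          exact hmaps i
        · intro i _ j _ hij
          exact hinj hij
      simpa using h1
    rw [Int.card_Icc] at hcard_le
    have : ((m : ℤ) - 1 + 1 - (1 - (m : ℤ))).toNat = 2 * m - 1 := by omega
    rw [this] at hcard_le
    omega

end Lambert

section Product

variable {G : Type*} [AddCommGroup G]

lemma list_card_sum {α : Type*} (L : List (Multiset α)) :
    Multiset.card L.sum = (L.map Multiset.card).sum := by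
  induction L with
  | nil => simp
  | cons B L ih => simp [ih]

lemma fst_msum (M : Multiset (G × ℤ)) : M.sum.1 = (M.map Prod.fst).sum := by
  induction M using Multiset.induction with
  | empty => simp
  | cons p M ih => simp [ih]

lemma snd_msum (M : Multiset (G × ℤ)) : M.sum.2 = (M.map Prod.snd).sum := by
  induction M using Multiset.induction with
  | empty => simp
  | cons p M ih => simp [ih]

lemma sigma_list (L : List (Multiset (G × ℤ))) :
    (L.map (fun B => B.sum.1)).sum = L.sum.sum.1 := by
  induction L with
  | nil => simp
  | cons B L ih => simp [ih]

lemma sigma_msum (M : Multiset (Multiset (G × ℤ))) :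
    (M.map (fun B => B.sum.1)).sum = M.sum.sum.1 := by
  induction M using Multiset.induction with
  | empty => simp
  | cons B M ih => simp [ih]

lemma sigma_msum_snd (M : Multiset (Multiset (G × ℤ))) :
    (M.map (fun B => B.sum.2)).sum = M.sum.sum.2 := by
  induction M using Multiset.induction with
  | empty => simp
  | cons B M ih => simp [ih]

lemma le_msum_of_mem {α : Type*} {M : Multiset (Multiset α)} {B : Multiset α}
    (h : B ∈ M) : B ≤ M.sum := by
  obtain ⟨M', rfl⟩ := Multiset.exists_cons_of_mem h
  rw [Multiset.sum_cons]
  exact le_add_right le_rfl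

/-- Partition a zero-sum (w.r.t. second coordinates) multiset of pairs into blocks
whose second coordinates are minimal zero-sum sequences. -/
lemma exists_partition (m : ℕ) :
    ∀ n (S : Multiset (G × ℤ)), Multiset.card S ≤ n →
      (∀ p ∈ S, p.2 ∈ Set.Icc (-(m : ℤ)) m) → (S.map Prod.snd).sum = 0 →
      ∃ L : List (Multiset (G × ℤ)), L.sum = S ∧
        ∀ B ∈ L, IsMinZeroSumSeq (Set.Icc (-(m : ℤ)) m) (Multiset.map Prod.snd B) := by
  classical
  intro n
  induction n with
  | zero =>
    intro S hc _ _
    have : S = 0 := Multiset.card_eq_zero.mp (Nat.le_zero.mp hc)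
    exact ⟨[], by simp [this], by simp⟩
  | succ n ih =>
    intro S hc hmem hsum
    by_cases hS0 : S = 0
    · exact ⟨[], by simp [hS0], by simp⟩
    · have h0 : S.map Prod.snd ≠ 0 := by simpa using hS0
      have hm2 : ∀ x ∈ S.map Prod.snd, x ∈ Set.Icc (-(m : ℤ)) m := by
        intro x hx
        obtain ⟨p, hp, rfl⟩ := Multiset.mem_map.mp hx
        exact hmem p hp
      obtain ⟨t, hts, htmin⟩ := exists_min_sub _ (Multiset.card (S.map Prod.snd))
        (S.map Prod.snd) le_rfl h0 hm2 hsum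
      obtain ⟨B, hBS, hBt⟩ := exists_le_map hts
      have hB0 : B ≠ 0 := by
        rintro rfl
        rw [← hBt] at htmin
        exact htmin.1 (by simp)
      have hBadd : S - B + B = S := tsub_add_cancel_of_le hBS
      have hrest_mem : ∀ p ∈ S - B, p.2 ∈ Set.Icc (-(m : ℤ)) m :=
        fun p hp => hmem p (Multiset.mem_of_le tsub_le_self hp)
      have hsnd0 : ((S - B).map Prod.snd).sum = 0 := by
        have h1 := congrArg (fun T : Multiset (G × ℤ) => (T.map Prod.snd).sum) hBadd
        simp only [Multiset.map_add, Multiset.sum_add] at h1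
        rw [hBt, htmin.2.2.1, hsum] at h1
        omega
      have hcardB : 0 < Multiset.card B := Multiset.card_pos.mpr hB0
      have hcardrest : Multiset.card (S - B) ≤ n := by
        have := congrArg Multiset.card hBadd
        rw [Multiset.card_add] at this
        omega
      obtain ⟨L, hLsum, hLmin⟩ := ih (S - B) hcardrest hrest_mem hsnd0
      refine ⟨B :: L, ?_, ?_⟩
      · rw [List.sum_cons, hLsum, add_comm]
        exact hBadd
      · intro B' hB'
        rcases List.mem_cons.mp hB' with rfl | hB'L
        · rw [hBt]; exact htmin
        · exact hLmin B' hB'L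

/-- Upper bound: a minimal zero-sum sequence over `G × ⟦-m,m⟧` has length at most
`|G| * max 2 (2m-1)`. -/
lemma prod_upper [Fintype G] {m : ℕ} (hm : 0 < m)
    {S : Multiset (G × ℤ)} (hS : IsMinZeroSumSeq {p : G × ℤ | p.2 ∈ Set.Icc (-(m : ℤ)) m} S) :
    Multiset.card S ≤ Fintype.card G * max 2 (2 * m - 1) := by
  classical
  have hmem : ∀ p ∈ S, p.2 ∈ Set.Icc (-(m : ℤ)) m := hS.2.1
  have hsnd : (S.map Prod.snd).sum = 0 := by
    rw [← snd_msum, hS.2.2.1]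
    rfl
  obtain ⟨L, hLsum, hLmin⟩ := exists_partition m (Multiset.card S) S le_rfl hmem hsnd
  have hLne : ∀ B ∈ L, B ≠ 0 := by
    intro B hB h0
    subst h0
    exact (hLmin 0 hB).1 (by simp)
  have hLS : (↑L : Multiset (Multiset (G × ℤ))).sum = S := by
    rw [Multiset.sum_coe, hLsum]
  -- the sequence of block sums (first coordinates) is a minimal zero-sum sequence over G
  have hσ : IsMinZeroSumSeq (Set.univ : Set G)
      ((L.map (fun B => B.sum.1) : List G) : Multiset G) := by
    refine ⟨?_, fun x _ => Set.mem_univ x, ?_, ?_⟩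
    · rw [Ne, Multiset.coe_eq_zero, List.map_eq_nil_iff]
      intro h
      subst h
      exact hS.1 (by simpa using hLsum.symm)
    · rw [Multiset.sum_coe, sigma_list, hLsum, hS.2.2.1]
      rfl
    · intro t hts ht0 htsum
      have hts' : t ≤ Multiset.map (fun B => B.sum.1)
          (↑L : Multiset (Multiset (G × ℤ))) := by
        rw [Multiset.map_coe]
        exact hts.le
      obtain ⟨M, hML, hMt⟩ := exists_le_map hts'
      have hMmem : ∀ B ∈ M, B ∈ L := by
        intro B hB
        have := Multiset.mem_of_le hML hB
        simpa using this
      have hUS : M.sum ≤ S := by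
        rw [← hLS]
        have h1 : (↑L : Multiset (Multiset (G × ℤ))) - M + M = ↑L := tsub_add_cancel_of_le hML
        calc M.sum ≤ ((↑L : Multiset (Multiset (G × ℤ))) - M).sum + M.sum := le_add_self
          _ = (((↑L : Multiset (Multiset (G × ℤ))) - M) + M).sum := (Multiset.sum_add _ _).symm
          _ = (↑L : Multiset (Multiset (G × ℤ))).sum := by rw [h1]
      have hU1 : M.sum.sum.1 = 0 := by rw [← sigma_msum, hMt, htsum]
      have hU2 : M.sum.sum.2 = 0 := by
        rw [← sigma_msum_snd]
        apply Multiset.sum_eq_zero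
        intro x hx
        obtain ⟨B, hB, rfl⟩ := Multiset.mem_map.mp hx
        rw [snd_msum]
        exact (hLmin B (hMmem B hB)).2.2.1
      have hUsum : M.sum.sum = 0 := by
        rw [Prod.ext_iff]
        exact ⟨hU1, hU2⟩
      have hU0 : M.sum ≠ 0 := by
        have hM0 : M ≠ 0 := by
          rintro rfl
          rw [← hMt] at ht0
          exact ht0 (by simp)
        obtain ⟨B, hB⟩ := Multiset.exists_mem_of_ne_zero hM0
        have hBne := hLne B (hMmem B hB)
        intro h
        have h2 := le_msum_of_mem hB
        rw [h, Multiset.le_zero] at h2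
        exact hBne h2
      have hMlt : Multiset.card M < L.length := by
        have h1 : Multiset.card t <
            Multiset.card ((L.map (fun B => B.sum.1) : List G) : Multiset G) :=
          Multiset.card_lt_card hts
        rw [Multiset.coe_card, List.length_map] at h1
        rw [← hMt, Multiset.card_map] at h1
        exact h1
      have hRne : (↑L : Multiset (Multiset (G × ℤ))) - M ≠ 0 := by
        intro h
        have h1 : (↑L : Multiset (Multiset (G × ℤ))) - M + M = ↑L := tsub_add_cancel_of_le hML
        rw [h, zero_add] at h1
        have := congrArg Multiset.card h1
        rw [Multiset.coe_card] at this
        omega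
      have hcardlt : Multiset.card M.sum < Multiset.card S := by
        have h1 : (↑L : Multiset (Multiset (G × ℤ))) - M + M = ↑L := tsub_add_cancel_of_le hML
        have h2 : Multiset.card S =
            Multiset.card (((↑L : Multiset (Multiset (G × ℤ))) - M).sum) +
              Multiset.card M.sum := by
          conv_lhs => rw [← hLS, ← h1]
          rw [Multiset.sum_add, Multiset.card_add]
        obtain ⟨B, hB⟩ := Multiset.exists_mem_of_ne_zero hRne
        have hBL : B ∈ L := by
          have := Multiset.mem_of_le (tsub_le_self
            (α := Multiset (Multiset (G × ℤ)))) hB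
          simpa using this
        have hBne := hLne B hBL
        have h3 : 0 < Multiset.card (((↑L : Multiset (Multiset (G × ℤ))) - M).sum) := by
          have h4 := le_msum_of_mem hB
          have h5 := Multiset.card_pos.mpr hBne
          have h6 := Multiset.card_le_card h4
          omega
        omega
      exact hS.2.2.2 M.sum (lt_of_le_of_card_lt hUS hcardlt) hU0 hUsum
  have hlen : L.length ≤ Fintype.card G := by
    have h1 := card_le_of_min hσ
    rwa [Multiset.coe_card, List.length_map] at h1
  have hblockmem : ∀ x ∈ L.map Multiset.card, x ≤ max 2 (2 * m - 1) := by
    intro x hx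
    obtain ⟨B, hB, rfl⟩ := List.mem_map.mp hx
    have h1 := lambert hm (hLmin B hB)
    rwa [Multiset.card_map] at h1
  calc Multiset.card S = (L.map Multiset.card).sum := by rw [← hLsum, list_card_sum]
    _ ≤ (L.map Multiset.card).length • (max 2 (2 * m - 1)) :=
        List.sum_le_card_nsmul _ _ hblockmem
    _ = L.length * max 2 (2 * m - 1) := by rw [List.length_map, smul_eq_mul]
    _ ≤ Fintype.card G * max 2 (2 * m - 1) := Nat.mul_le_mul_right _ hlen

end Product

section Davenport

variable {A : Type*} [AddCommGroup A]

lemma le_davenport {X : Set A} {s : Multiset A} (hs : IsMinZeroSumSeq X s) :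
    (Multiset.card s : ℕ∞) ≤ davenport X :=
  le_iSup₂ (f := fun (s : Multiset A) (_ : IsMinZeroSumSeq X s) => (Multiset.card s : ℕ∞)) s hs

lemma davenport_le {X : Set A} {N : ℕ}
    (h : ∀ s, IsMinZeroSumSeq X s → Multiset.card s ≤ N) : davenport X ≤ (N : ℕ∞) :=
  iSup₂_le fun s hs => by exact_mod_cast h s hs

lemma davenport_eq {X : Set A} {N : ℕ}
    (h : ∀ s, IsMinZeroSumSeq X s → Multiset.card s ≤ N)
    {w : Multiset A} (hw : IsMinZeroSumSeq X w) (hcard : Multiset.card w = N) :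
    davenport X = (N : ℕ∞) :=
  le_antisymm (davenport_le h) (by rw [← hcard]; exact le_davenport hw)

end Davenport

section Witnesses

lemma isMin_gen {G : Type*} [AddCommGroup G] [Fintype G] {g : G}
    (hord : addOrderOf g = Fintype.card G) :
    IsMinZeroSumSeq (Set.univ : Set G) (Multiset.replicate (Fintype.card G) g) := by
  apply isMin_repl _ (Set.mem_univ g) Fintype.card_pos
  · rw [← hord]
    exact addOrderOf_nsmul_eq_zero g
  · intro c hc hcg
    have hdvd := addOrderOf_dvd_iff_nsmul_eq_zero.mpr hcg
    rw [hord] at hdvd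
    rcases Nat.eq_zero_or_pos c with h | h
    · exact Or.inl h
    · exact Or.inr (le_antisymm hc (Nat.le_of_dvd h hdvd))

lemma dav_univ {G : Type*} [AddCommGroup G] [Fintype G] {g : G}
    (hord : addOrderOf g = Fintype.card G) :
    davenport (Set.univ : Set G) = (Fintype.card G : ℕ∞) := by
  apply davenport_eq (fun s hs => card_le_of_min hs) (isMin_gen hord)
  simp

lemma isMinJ_one {m : ℕ} (hm : m = 1) : IsMinZeroSumSeq (Set.Icc (-(m : ℤ)) m)
    (Multiset.replicate 1 (1 : ℤ) + Multiset.replicate 1 (-1 : ℤ)) := by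
  apply isMin_two
  · norm_num
  · norm_num
  · rw [Set.mem_Icc]; omega
  · rw [Set.mem_Icc]; omega
  · simp
  · intro c d hc hd hsum
    rw [nsmul_eq_mul, nsmul_eq_mul] at hsum
    omega

lemma isMinJ_big {m : ℕ} (hm : 2 ≤ m) :
    IsMinZeroSumSeq (Set.Icc (-(m : ℤ)) m)
      (Multiset.replicate m ((m : ℤ) - 1) + Multiset.replicate (m - 1) (-(m : ℤ))) := by
  have h1 : ((m - 1 : ℕ) : ℤ) = (m : ℤ) - 1 := by omega
  apply isMin_two
  · intro h; omega
  · omega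
  · rw [Set.mem_Icc]; omega
  · rw [Set.mem_Icc]; omega
  · rw [nsmul_eq_mul, nsmul_eq_mul, h1]; ring
  · intro c d hc hd hsum
    rw [nsmul_eq_mul, nsmul_eq_mul] at hsum
    have key : (m : ℤ) * ((c : ℤ) - (d : ℤ)) = (c : ℤ) := by linear_combination hsum
    rcases le_or_gt ((c : ℤ) - d) 0 with hu | hu
    · left
      have h2 : (m : ℤ) * ((c : ℤ) - d) ≤ 0 :=
        mul_nonpos_iff.mpr (Or.inl ⟨by omega, hu⟩)
      have h3 : (c : ℤ) ≤ 0 := key ▸ h2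
      have hc0 : c = 0 := by omega
      subst hc0
      refine ⟨rfl, ?_⟩
      have h4 : (m : ℤ) * (-(d : ℤ)) = 0 := by linear_combination key
      rcases mul_eq_zero.mp h4 with h5 | h5
      · omega
      · omega
    · right
      have h2 : (m : ℤ) * 1 ≤ (m : ℤ) * ((c : ℤ) - d) :=
        mul_le_mul_of_nonneg_left (by omega) (by positivity)
      have h3 : (m : ℤ) ≤ (c : ℤ) := by rw [key] at h2; simpa using h2
      have h4 : (c : ℤ) = m := by omega
      have h6 : (m : ℤ) * ((c : ℤ) - d) = (m : ℤ) * 1 := by rw [key, h4, mul_one]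
      have h7 : (c : ℤ) - d = 1 := mul_left_cancel₀ (by omega) h6
      constructor <;> omega

lemma isMinX_one {G : Type*} [AddCommGroup G] [Fintype G] {g : G}
    (hord : addOrderOf g = Fintype.card G) {m : ℕ} (hm : m = 1) :
    IsMinZeroSumSeq {p : G × ℤ | p.2 ∈ Set.Icc (-(m : ℤ)) m}
      (Multiset.replicate (Fintype.card G) ((g, 1) : G × ℤ) +
        Multiset.replicate (Fintype.card G) (((0 : G), (-1 : ℤ)) : G × ℤ)) := by
  apply isMin_two
  · simp [Prod.ext_iff]
  · exact Fintype.card_pos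
  · show (1 : ℤ) ∈ Set.Icc (-(m : ℤ)) m
    rw [Set.mem_Icc]; omega
  · show (-1 : ℤ) ∈ Set.Icc (-(m : ℤ)) m
    rw [Set.mem_Icc]; omega
  · show ((Fintype.card G • g, Fintype.card G • (1 : ℤ)) : G × ℤ) +
      (Fintype.card G • (0 : G), Fintype.card G • (-1 : ℤ)) = 0
    rw [Prod.mk_add_mk]
    rw [Prod.ext_iff]
    constructor
    · show Fintype.card G • g + Fintype.card G • (0 : G) = 0
      rw [smul_zero, add_zero, ← hord]
      exact addOrderOf_nsmul_eq_zero g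
    · show Fintype.card G • (1 : ℤ) + Fintype.card G • (-1 : ℤ) = 0
      rw [nsmul_eq_mul, nsmul_eq_mul]
      ring
  · intro c d hc hd hsum
    have hsum' : ((c • g + d • (0 : G), c • (1 : ℤ) + d • (-1 : ℤ)) : G × ℤ) = 0 := hsum
    rw [Prod.ext_iff] at hsum'
    obtain ⟨hfst, hsnd⟩ := hsum'
    have hcd : c = d := by
      have : c • (1 : ℤ) + d • (-1 : ℤ) = 0 := hsnd
      rw [nsmul_eq_mul, nsmul_eq_mul] at this
      omega
    have hcg : c • g = 0 := by
      have : c • g + d • (0 : G) = 0 := hfst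
      rwa [smul_zero, add_zero] at this
    have hdvd := addOrderOf_dvd_iff_nsmul_eq_zero.mpr hcg
    rw [hord] at hdvd
    rcases Nat.eq_zero_or_pos c with h | h
    · exact Or.inl ⟨h, hcd ▸ h⟩
    · have := le_antisymm hc (Nat.le_of_dvd h hdvd)
      exact Or.inr ⟨this, hcd ▸ this⟩

lemma isMinX_big {G : Type*} [AddCommGroup G] [Fintype G] {g : G}
    (hord : addOrderOf g = Fintype.card G) {m : ℕ} (hm : 2 ≤ m) :
    IsMinZeroSumSeq {p : G × ℤ | p.2 ∈ Set.Icc (-(m : ℤ)) m}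
      (Multiset.replicate (Fintype.card G * m) ((g, (m : ℤ) - 1) : G × ℤ) +
        Multiset.replicate (Fintype.card G * (m - 1)) ((-g, -(m : ℤ)) : G × ℤ)) := by
  have hn : 0 < Fintype.card G := Fintype.card_pos
  have h1 : ((m - 1 : ℕ) : ℤ) = (m : ℤ) - 1 := by omega
  apply isMin_two
  · intro h
    rw [Prod.ext_iff] at h
    have h2 : (m : ℤ) - 1 = -(m : ℤ) := h.2
    omega
  · positivity
  · show ((m : ℤ) - 1) ∈ Set.Icc (-(m : ℤ)) m
    rw [Set.mem_Icc]; omega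
  · show (-(m : ℤ)) ∈ Set.Icc (-(m : ℤ)) m
    rw [Set.mem_Icc]; omega
  · show (((Fintype.card G * m) • g, (Fintype.card G * m) • ((m : ℤ) - 1)) : G × ℤ) +
      ((Fintype.card G * (m - 1)) • (-g), (Fintype.card G * (m - 1)) • (-(m : ℤ))) = 0
    rw [Prod.mk_add_mk, Prod.ext_iff]
    constructor
    · show (Fintype.card G * m) • g + (Fintype.card G * (m - 1)) • (-g) = 0
      rw [smul_neg, ← natCast_zsmul g (Fintype.card G * m),
        ← natCast_zsmul g (Fintype.card G * (m - 1)), ← sub_zsmul]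
      have h2 : ((Fintype.card G * m : ℕ) : ℤ) - ((Fintype.card G * (m - 1) : ℕ) : ℤ) =
          ((Fintype.card G : ℕ) : ℤ) := by
        push_cast [h1]
        ring
      rw [h2, natCast_zsmul, ← hord]
      exact addOrderOf_nsmul_eq_zero g
    · show (Fintype.card G * m) • ((m : ℤ) - 1) + (Fintype.card G * (m - 1)) • (-(m : ℤ)) = 0
      rw [nsmul_eq_mul, nsmul_eq_mul]
      push_cast [h1]
      ring
  · intro c d hc hd hsum
    have hsum' : ((c • g + d • (-g), c • ((m : ℤ) - 1) + d • (-(m : ℤ))) : G × ℤ) = 0 := hsum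
    rw [Prod.ext_iff] at hsum'
    obtain ⟨hfst, hsnd⟩ := hsum'
    have hsnd' : (c : ℤ) * ((m : ℤ) - 1) + (d : ℤ) * (-(m : ℤ)) = 0 := by
      have : c • ((m : ℤ) - 1) + d • (-(m : ℤ)) = 0 := hsnd
      rwa [nsmul_eq_mul, nsmul_eq_mul] at this
    have key : (m : ℤ) * ((c : ℤ) - (d : ℤ)) = (c : ℤ) := by linear_combination hsnd'
    rcases le_or_gt ((c : ℤ) - d) 0 with hu | hu
    · left
      have h2 : (m : ℤ) * ((c : ℤ) - d) ≤ 0 :=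
        mul_nonpos_iff.mpr (Or.inl ⟨by omega, hu⟩)
      have h3 : (c : ℤ) ≤ 0 := key ▸ h2
      have hc0 : c = 0 := by omega
      subst hc0
      refine ⟨rfl, ?_⟩
      have h4 : (m : ℤ) * (-(d : ℤ)) = 0 := by linear_combination key
      rcases mul_eq_zero.mp h4 with h5 | h5 <;> omega
    · -- c - d ≥ 1; first coordinate forces c - d = n
      have hzg : ((c : ℤ) - (d : ℤ)) • g = 0 := by
        have hfst' : c • g + d • (-g) = 0 := hfst
        rw [smul_neg] at hfst'
        rw [sub_zsmul, natCast_zsmul, natCast_zsmul]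
        exact hfst'
      have hdvd : ((Fintype.card G : ℤ)) ∣ ((c : ℤ) - d) := by
        have := addOrderOf_dvd_iff_zsmul_eq_zero.mpr hzg
        rwa [hord] at this
      have hle : (c : ℤ) - d ≤ Fintype.card G := by
        -- since m * (c - d) = c ≤ n * m
        by_contra hgt
        push_neg at hgt
        have h2 : (m : ℤ) * ((Fintype.card G : ℤ) + 1) ≤ (m : ℤ) * ((c : ℤ) - d) :=
          mul_le_mul_of_nonneg_left (by omega) (by positivity)
        rw [key] at h2
        have h3 : (c : ℤ) ≤ (Fintype.card G : ℤ) * m := by exact_mod_cast hc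
        nlinarith
      have hu' : (c : ℤ) - d = Fintype.card G :=
        le_antisymm hle (Int.le_of_dvd (by omega) hdvd)
      right
      have hcval : (c : ℤ) = (Fintype.card G : ℤ) * m := by
        rw [← key, hu']; ring
      constructor
      · exact_mod_cast hcval
      · have hd7 : (d : ℤ) = (Fintype.card G : ℤ) * ((m : ℤ) - 1) := by linear_combination hcval - hu'
        have h7 : ((Fintype.card G * (m - 1) : ℕ) : ℤ) =
            (Fintype.card G : ℤ) * ((m : ℤ) - 1) := by
          push_cast [h1]
          ring
        have h8 : (d : ℤ) = ((Fintype.card G * (m - 1) : ℕ) : ℤ) := by rw [hd7, h7]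
        exact_mod_cast h8

end Witnesses

section Main

lemma dav_J {m : ℕ} (hm : 0 < m) :
    davenport (Set.Icc (-(m : ℤ)) m) = ((max 2 (2 * m - 1) : ℕ) : ℕ∞) := by
  rcases Nat.lt_or_ge m 2 with h2 | h2
  · have hm1 : m = 1 := by omega
    refine davenport_eq (fun s hs => lambert hm hs) (isMinJ_one hm1) ?_
    simp [Multiset.card_replicate]
    omega
  · refine davenport_eq (fun s hs => lambert hm hs) (isMinJ_big h2) ?_
    simp only [Multiset.card_add, Multiset.card_replicate]
    omega

lemma dav_X {G : Type*} [AddCommGroup G] [Fintype G] {g : G}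
    (hord : addOrderOf g = Fintype.card G) {m : ℕ} (hm : 0 < m) :
    davenport {p : G × ℤ | p.2 ∈ Set.Icc (-(m : ℤ)) m} =
      ((Fintype.card G * max 2 (2 * m - 1) : ℕ) : ℕ∞) := by
  rcases Nat.lt_or_ge m 2 with h2 | h2
  · have hm1 : m = 1 := by omega
    refine davenport_eq (fun s hs => prod_upper hm hs) (isMinX_one hord hm1) ?_
    simp only [Multiset.card_add, Multiset.card_replicate]
    rw [hm1]
    norm_num
    omega
  · refine davenport_eq (fun s hs => prod_upper hm hs) (isMinX_big hord h2) ?_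
    simp only [Multiset.card_add, Multiset.card_replicate]
    have hmax : max 2 (2 * m - 1) = 2 * m - 1 := by omega
    rw [hmax]
    obtain ⟨k, rfl⟩ : ∃ k, m = k + 2 := ⟨m - 2, by omega⟩
    have e1 : k + 2 - 1 = k + 1 := by omega
    have e2 : 2 * (k + 2) - 1 = 2 * k + 3 := by omega
    rw [e1, e2]
    ring

end Main

end DavAux

theorem davenport_cyclic_times_interval (G : Type*) [AddCommGroup G] [Fintype G]
    (hG : IsAddCyclic G) (m : ℕ) (hm : 0 < m) :
    davenport {p : G × ℤ | p.2 ∈ Set.Icc (-(m : ℤ)) m} =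
      davenport (Set.univ : Set G) * davenport (Set.Icc (-(m : ℤ)) m) := by
  classical
  haveI := hG
  obtain ⟨g, hg⟩ := IsAddCyclic.exists_generator (α := G)
  have hord : addOrderOf g = Fintype.card G := by
    rw [addOrderOf_eq_card_of_forall_mem_zmultiples hg, Nat.card_eq_fintype_card]
  rw [DavAux.dav_X hord hm, DavAux.dav_univ hord, DavAux.dav_J hm, ← Nat.cast_mul]
end

section
/- Let G be an abelian group. If X ⊆ Y ⊆ G, then D(X) ≤ D(Y), and D(−X) = D(X) where −X = {−x : x ∈ X}. Moreover, for every integer m ≥ 2, D(⟦−m, m⟧) = D(⟦−(m−1), m⟧). -/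
lemma sum_map_neg_aux {G : Type*} [AddCommGroup G] (s : Multiset G) :
    (s.map fun x => -x).sum = -s.sum := by
  induction s using Multiset.induction with
  | empty => simp
  | cons a s ih => simp [ih]; abel

lemma map_neg_map_neg_aux {G : Type*} [AddCommGroup G] (s : Multiset G) :
    ((s.map fun x => -x).map fun x => -x) = s := by
  rw [Multiset.map_map]; simp

/-- Generic comparison lemma for Davenport constants. -/
lemma davenport_le_aux {G : Type*} [AddCommGroup G] {X Y : Set G}
    (h : ∀ s, IsMinZeroSumSeq X s →
      ∃ t, IsMinZeroSumSeq Y t ∧ Multiset.card s ≤ Multiset.card t) :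
    davenport X ≤ davenport Y := by
  refine iSup_le fun s => iSup_le fun hs => ?_
  obtain ⟨t, ht, hc⟩ := h s hs
  calc (Multiset.card s : ℕ∞) ≤ (Multiset.card t : ℕ∞) := by exact_mod_cast hc
    _ ≤ _ := le_iSup₂ (f := fun t (_ : IsMinZeroSumSeq Y t) => (Multiset.card t : ℕ∞)) t ht

/-- Negating a minimal zero-sum sequence gives a minimal zero-sum sequence. -/
lemma map_neg_min_aux {G : Type*} [AddCommGroup G] {X Y : Set G} {s : Multiset G}
    (h : IsMinZeroSumSeq X s) (hY : ∀ x ∈ s, -x ∈ Y) :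
    IsMinZeroSumSeq Y (s.map fun x => -x) := by
  obtain ⟨h0, hmem, hsum, hmin⟩ := h
  refine ⟨by simpa using h0, ?_, ?_, ?_⟩
  · intro x hx
    obtain ⟨a, ha, rfl⟩ := Multiset.mem_map.mp hx
    exact hY a ha
  · rw [sum_map_neg_aux, hsum, neg_zero]
  · intro t ht ht0 htsum
    have h1 : t.map (fun x => -x) ≤ s := by
      have := Multiset.map_le_map (f := fun x : G => -x) ht.le
      rwa [map_neg_map_neg_aux] at this
    have h2 : t.map (fun x => -x) ≠ s := by
      intro he
      exact ht.ne (by rw [← map_neg_map_neg_aux t, he])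
    refine hmin (t.map fun x => -x) (lt_of_le_of_ne h1 h2) (by simpa using ht0) ?_
    rw [sum_map_neg_aux, htsum, neg_zero]

lemma davenport_mono_aux {G : Type*} [AddCommGroup G] {X Y : Set G} (hXY : X ⊆ Y) :
    davenport X ≤ davenport Y :=
  davenport_le_aux fun s hs => ⟨s, ⟨hs.1, fun x hx => hXY (hs.2.1 x hx), hs.2.2⟩, le_rfl⟩

theorem davenport_monotone_even (G : Type*) [AddCommGroup G] :
    (∀ X Y : Set G, X ⊆ Y → davenport X ≤ davenport Y) ∧
    (∀ X : Set G, davenport ((fun x => -x) '' X) = davenport X) ∧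
    (∀ m : ℕ, 2 ≤ m →
      davenport (Set.Icc (-(m : ℤ)) m) = davenport (Set.Icc (-((m : ℤ) - 1)) m)) := by
  refine ⟨fun X Y h => davenport_mono_aux h, ?_, ?_⟩
  · intro X
    apply le_antisymm
    · refine davenport_le_aux fun s hs => ⟨s.map fun x => -x, ?_, by simp⟩
      refine map_neg_min_aux hs fun x hx => ?_
      obtain ⟨a, ha, rfl⟩ := hs.2.1 x hx
      simpa using ha
    · refine davenport_le_aux fun s hs => ⟨s.map fun x => -x, ?_, by simp⟩
      exact map_neg_min_aux hs fun x hx => ⟨x, hs.2.1 x hx, rfl⟩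
  · intro m hm2
    have hm : (2 : ℤ) ≤ (m : ℤ) := by exact_mod_cast hm2
    apply le_antisymm
    · refine davenport_le_aux fun s hs => ?_
      obtain ⟨h0, hmem, hsum, hmin⟩ := hs
      by_cases hnm : (-(m : ℤ)) ∈ s
      · by_cases hpm : ((m : ℤ)) ∈ s
        · -- both m and -m in s : s = {m, -m}
          have hnm' : (-(m : ℤ)) ∈ s.erase (m : ℤ) :=
            Multiset.mem_erase_of_ne (by omega) |>.mpr hnm
          have hpair : ({(m : ℤ), -(m : ℤ)} : Multiset ℤ) ≤ s := by
            rw [← Multiset.cons_erase hpm]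
            exact Multiset.cons_le_cons _ (Multiset.singleton_le.mpr hnm')
          have hpsum : ({(m : ℤ), -(m : ℤ)} : Multiset ℤ).sum = 0 := by simp
          have hp0 : ({(m : ℤ), -(m : ℤ)} : Multiset ℤ) ≠ 0 := by simp
          have heq : ({(m : ℤ), -(m : ℤ)} : Multiset ℤ) = s := by
            by_contra hne
            exact hmin _ (lt_of_le_of_ne hpair hne) hp0 hpsum
          have hcard : Multiset.card s = 2 := by rw [← heq]; simp
          refine ⟨({1, -1} : Multiset ℤ), ⟨by simp, ?_, by simp, ?_⟩, by simp [hcard]⟩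
          · intro x hx
            have hx' : x = 1 ∨ x = -1 := by simpa using hx
            rcases hx' with rfl | rfl <;> simp only [Set.mem_Icc] <;> omega
          · intro t ht ht0 hts
            have hcl : Multiset.card t < 2 := by
              have := Multiset.card_lt_card ht
              have h2 : Multiset.card ({1, -1} : Multiset ℤ) = 2 := rfl
              omega
            have hc1 : Multiset.card t = 1 := by
              have : Multiset.card t ≠ 0 := by simpa [Multiset.card_eq_zero] using ht0
              omega
            obtain ⟨x, rfl⟩ := Multiset.card_eq_one.mp hc1
            have hx : x ∈ ({1, -1} : Multiset ℤ) :=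
              Multiset.mem_of_le ht.le (Multiset.mem_singleton_self x)
            have hx' : x = 1 ∨ x = -1 := by simpa using hx
            simp only [Multiset.sum_singleton] at hts
            rcases hx' with h | h <;> omega
        · -- m ∉ s : negate s
          refine ⟨s.map fun x => -x, ?_, by simp⟩
          refine map_neg_min_aux ⟨h0, hmem, hsum, hmin⟩ fun x hx => ?_
          have h1 := hmem x hx
          simp only [Set.mem_Icc] at h1 ⊢
          have : x ≠ (m : ℤ) := fun h => hpm (h ▸ hx)
          omega
      · -- -m ∉ s : s itself works
        refine ⟨s, ⟨h0, fun x hx => ?_, hsum, hmin⟩, le_rfl⟩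
        have h1 := hmem x hx
        simp only [Set.mem_Icc] at h1 ⊢
        have : x ≠ -(m : ℤ) := fun h => hnm (h ▸ hx)
        omega
    · refine davenport_mono_aux fun x hx => ?_
      simp only [Set.mem_Icc] at hx ⊢
      omega
end
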